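/- arXiv:1410.6296 — 6 statements merged into one kernel-verified Lean document; each statement's English description precedes it below -/
import Mathlib

section
/- Let (V1, V2, V3) be a random vector distributed according to the multinomial distribution with n trials and probabilities (p1, p2, p3), p1+p2+p3=1, with p3 > 0 and n ≥ 0. Then E[V1 / (n + 1 - V1 - V2)] = (p1/p3) · (1 - (p1 + p2)^n). -/
/-!
Writing `k₃ = n - k₁ - k₂`, the identity
`k₁ / (k₃ + 1) · n! / (k₁! k₂! k₃!) p₁^k₁ p₂^k₂ p₃^k₃ = p₁/p₃ · n! / ((k₁-1)! k₂! (k₃+1)!) p₁^(k₁-1) p₂^k₂ p₃^(k₃+1)`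
turns the expectation into `p₁/p₃` times the total multinomial mass of the outcomes with `k₃ ≥ 1`.
That mass is `1` minus the mass of `k₃ = 0`, which by the binomial theorem is `(p₁ + p₂)^n`.
-/

open MeasureTheory Finset Nat

theorem integral_comp_eq_sum_measureReal_preimage {Ω α : Type*} [MeasurableSpace Ω]
    [MeasurableSpace α] [MeasurableSingletonClass α] (μ : Measure Ω) [IsFiniteMeasure μ]
    {X : Ω → α} (hX : Measurable X) {s : Finset α} (hs : ∀ ω, X ω ∈ s) (f : α → ℝ) :
    ∫ ω, f (X ω) ∂μ = ∑ a ∈ s, μ.real (X ⁻¹' {a}) * f a := by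
  classical
  have hpre : ∀ a, MeasurableSet (X ⁻¹' {a}) := fun a => hX (measurableSet_singleton a)
  have hsplit : (fun ω => f (X ω)) = fun ω => ∑ a ∈ s, (X ⁻¹' {a}).indicator (fun _ => f a) ω := by
    funext ω
    rw [sum_eq_single_of_mem (f := fun a => (X ⁻¹' {a}).indicator (fun _ => f a) ω) (X ω) (hs ω)]
    · simp
    · exact fun a _ ha => Set.indicator_of_notMem (Ne.symm ha) _
  rw [hsplit, integral_finsetSum s fun a _ => (integrable_const (f a)).indicator (hpre a)]
  exact sum_congr rfl fun a _ => by rw [integral_indicator_const _ (hpre a), smul_eq_mul]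

noncomputable def trinomialTerm (n : ℕ) (x y z : ℝ) (k₁ k₂ : ℕ) : ℝ :=
  n ! / (k₁ ! * k₂ ! * (n - k₁ - k₂)!) * x ^ k₁ * y ^ k₂ * z ^ (n - k₁ - k₂)

section
variable {n k₁ k₂ : ℕ} {x y z : ℝ}

theorem trinomialTerm_nonneg (hx : 0 ≤ x) (hy : 0 ≤ y) (hz : 0 ≤ z) :
    0 ≤ trinomialTerm n x y z k₁ k₂ := by
  unfold trinomialTerm; positivity

theorem trinomialTerm_eq_choose_mul_choose (h : k₁ + k₂ ≤ n) :
    trinomialTerm n x y z k₁ k₂ =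
      n.choose k₁ * x ^ k₁ * ((n - k₁).choose k₂ * y ^ k₂ * z ^ (n - k₁ - k₂)) := by
  have h₁ := choose_mul_factorial_mul_factorial (show k₁ ≤ n by omega)
  have h₂ := choose_mul_factorial_mul_factorial (show k₂ ≤ n - k₁ by omega)
  have hcoeff : (n ! / (k₁ ! * k₂ ! * (n - k₁ - k₂)!) : ℝ) = n.choose k₁ * (n - k₁).choose k₂ := by
    rw [div_eq_iff (by positivity), ← h₁, ← h₂]
    push_cast
    ring
  rw [trinomialTerm, hcoeff]
  ring

theorem trinomialTerm_sub_self (h : k₁ ≤ n) :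
    trinomialTerm n x y z k₁ (n - k₁) = x ^ k₁ * y ^ (n - k₁) * n.choose k₁ := by
  rw [trinomialTerm_eq_choose_mul_choose (by omega), choose_self, Nat.sub_self, pow_zero]
  push_cast
  ring

theorem succ_div_mul_trinomialTerm_succ (hz : z ≠ 0) (h : k₁ + k₂ < n) :
    (k₁ + 1 : ℕ) / ((n : ℝ) + 1 - (k₁ + 1 : ℕ) - k₂) * trinomialTerm n x y z (k₁ + 1) k₂ =
      x / z * trinomialTerm n x y z k₁ k₂ := by
  obtain ⟨m, rfl⟩ : ∃ m, n = k₁ + k₂ + m + 1 := ⟨n - k₁ - k₂ - 1, by omega⟩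
  have hm₁ : k₁ + k₂ + m + 1 - (k₁ + 1) - k₂ = m := by omega
  have hm₂ : k₁ + k₂ + m + 1 - k₁ - k₂ = m + 1 := by omega
  simp only [trinomialTerm, hm₁, hm₂, factorial_succ, pow_succ]
  push_cast
  rw [show (k₁ + k₂ + m + 1 + 1 - (k₁ + 1) - k₂ : ℝ) = m + 1 by ring]
  field_simp

end

theorem sum_trinomialTerm (n : ℕ) (x y z : ℝ) :
    ∑ k₁ ∈ range (n + 1), ∑ k₂ ∈ range (n - k₁ + 1), trinomialTerm n x y z k₁ k₂ =
      (x + y + z) ^ n := by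
  rw [add_assoc, add_pow]
  refine sum_congr rfl fun k₁ hk₁ => ?_
  rw [mem_range] at hk₁
  rw [add_pow, mul_sum, sum_mul]
  refine sum_congr rfl fun k₂ hk₂ => ?_
  rw [mem_range] at hk₂
  rw [trinomialTerm_eq_choose_mul_choose (by omega), Nat.sub_sub]
  ring

theorem sum_trinomialTerm_lt (n : ℕ) (x y z : ℝ) :
    ∑ k₁ ∈ range n, ∑ k₂ ∈ range (n - k₁), trinomialTerm n x y z k₁ k₂ =
      (x + y + z) ^ n - (x + y) ^ n := by
  have hsplit : ∑ k₁ ∈ range (n + 1), ∑ k₂ ∈ range (n - k₁ + 1), trinomialTerm n x y z k₁ k₂ =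
      ∑ k₁ ∈ range n, ∑ k₂ ∈ range (n - k₁), trinomialTerm n x y z k₁ k₂ +
        ∑ k₁ ∈ range (n + 1), trinomialTerm n x y z k₁ (n - k₁) := by
    rw [sum_congr rfl fun k₁ _ => sum_range_succ _ (n - k₁), sum_add_distrib,
      sum_range_succ (fun k₁ => ∑ k₂ ∈ range (n - k₁), _) n]
    simp
  have hdiag : ∑ k₁ ∈ range (n + 1), trinomialTerm n x y z k₁ (n - k₁) = (x + y) ^ n := by
    rw [add_pow]
    exact sum_congr rfl fun k hk => trinomialTerm_sub_self (Nat.lt_succ_iff.mp (mem_range.mp hk))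
  rw [← sum_trinomialTerm, hsplit, hdiag, add_sub_cancel_right]

theorem sum_div_mul_trinomialTerm (n : ℕ) (x y : ℝ) {z : ℝ} (hz : z ≠ 0) :
    ∑ k₁ ∈ range (n + 1), ∑ k₂ ∈ range (n - k₁ + 1),
        (k₁ : ℝ) / (n + 1 - k₁ - k₂) * trinomialTerm n x y z k₁ k₂ =
      x / z * ((x + y + z) ^ n - (x + y) ^ n) := by
  rw [sum_range_succ', ← sum_trinomialTerm_lt, mul_sum]
  simp only [Nat.cast_zero, zero_div, zero_mul, sum_const_zero, add_zero]
  refine sum_congr rfl fun k₁ hk₁ => ?_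
  rw [mem_range] at hk₁
  rw [show n - (k₁ + 1) + 1 = n - k₁ by omega, mul_sum]
  exact sum_congr rfl fun k₂ hk₂ => succ_div_mul_trinomialTerm_succ hz (by have := mem_range.mp hk₂; omega)

/-- For `(V1, V2, V3) ~ M(n; p1, p2, p3)` (with `V3 = n - V1 - V2`) and `p3 > 0`,
`E[V1 / (n + 1 - V1 - V2)] = (p1/p3) * (1 - (p1 + p2)^n)`. -/
theorem multinomial_harmonic_expectation {Ω : Type*} [MeasurableSpace Ω]
    (μ : Measure Ω) [IsProbabilityMeasure μ]
    (n : ℕ) (p1 p2 p3 : ℝ) (hp1 : 0 ≤ p1) (hp2 : 0 ≤ p2) (hp3 : 0 < p3)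
    (hsum : p1 + p2 + p3 = 1)
    (V1 V2 : Ω → ℕ) (hV1 : Measurable V1) (hV2 : Measurable V2)
    (hle : ∀ ω, V1 ω + V2 ω ≤ n)
    (hpmf : ∀ k1 k2 : ℕ, k1 + k2 ≤ n →
      μ {ω | V1 ω = k1 ∧ V2 ω = k2} =
        ENNReal.ofReal ((n.factorial : ℝ) /
            (k1.factorial * k2.factorial * (n - k1 - k2).factorial)
          * p1 ^ k1 * p2 ^ k2 * p3 ^ (n - k1 - k2))) :
    ∫ ω, (V1 ω : ℝ) / ((n : ℝ) + 1 - V1 ω - V2 ω) ∂μ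
      = p1 / p3 * (1 - (p1 + p2) ^ n) := by
  let s : Finset (ℕ × ℕ) := {k ∈ range (n + 1) ×ˢ range (n + 1) | k.1 + k.2 ≤ n}
  have hmem : ∀ k, k ∈ s ↔ k.1 ∈ range (n + 1) ∧ k.2 ∈ range (n - k.1 + 1) := by
    intro k; simp only [s, mem_filter, mem_product, mem_range]; omega
  have hprob : ∀ k ∈ s, μ.real ((fun ω => (V1 ω, V2 ω)) ⁻¹' {k}) =
      trinomialTerm n p1 p2 p3 k.1 k.2 := by
    rintro ⟨k₁, k₂⟩ hk
    have hset : (fun ω => (V1 ω, V2 ω)) ⁻¹' {(k₁, k₂)} = {ω | V1 ω = k₁ ∧ V2 ω = k₂} := by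
      ext; simp
    rw [measureReal_def, hset, hpmf k₁ k₂ (mem_filter.mp hk).2]
    exact ENNReal.toReal_ofReal (trinomialTerm_nonneg hp1 hp2 hp3.le)
  calc ∫ ω, (V1 ω : ℝ) / ((n : ℝ) + 1 - V1 ω - V2 ω) ∂μ
      = ∑ k ∈ s, μ.real ((fun ω => (V1 ω, V2 ω)) ⁻¹' {k}) * (k.1 / ((n : ℝ) + 1 - k.1 - k.2)) :=
        integral_comp_eq_sum_measureReal_preimage μ (hV1.prodMk hV2)
          (fun ω => (hmem _).mpr (by simp only [mem_range]; have := hle ω; omega))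
          (fun k => (k.1 : ℝ) / ((n : ℝ) + 1 - k.1 - k.2))
    _ = ∑ k ∈ s, (k.1 : ℝ) / ((n : ℝ) + 1 - k.1 - k.2) * trinomialTerm n p1 p2 p3 k.1 k.2 :=
        sum_congr rfl fun k hk => by rw [hprob k hk, mul_comm]
    _ = p1 / p3 * ((p1 + p2 + p3) ^ n - (p1 + p2) ^ n) := by
        rw [sum_finset_product s (range (n + 1)) (fun k₁ => range (n - k₁ + 1)) hmem]
        exact sum_div_mul_trinomialTerm n p1 p2 hp3.ne'
    _ = p1 / p3 * (1 - (p1 + p2) ^ n) := by rw [hsum, one_pow]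
end

section
/- Let U1, ..., Un be i.i.d. uniform on (0,1) p-values and consider the Benjamini–Hochberg step-up test at level α ∈ (0,1) with critical values α_{i:n} = (i/n)·α: let R = max{i : U_{i:n} ≤ (i/n)α} (max ∅ = 0) and V = #{i : U_i ≤ α_{R:n}}. Then E[V / max(R,1)] = α (all hypotheses are true, so V and R coincide on {R ≥ 1}, and E[V/max(R,1)] = P(R ≥ 1) = α). -/
open MeasureTheory ProbabilityTheory Finset
open scoped Classical

/-- number of p-values `≤ t`. -/
noncomputable def countLe {n : ℕ} (p : Fin n → ℝ) (t : ℝ) : ℕ :=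
  (Finset.univ.filter fun i => p i ≤ t).card

/-- step-up rejection count: `c i` is the `(i+1)`-th critical value; for nondecreasing
critical values this equals `max {k : p_{k:n} ≤ c_{k:n}}` (with `max ∅ = 0`). -/
noncomputable def suCount {n : ℕ} (c : Fin n → ℝ) (p : Fin n → ℝ) : ℕ :=
  (Finset.univ.filter fun k : Fin n => k.1 + 1 ≤ countLe p (c k)).sup fun k => k.1 + 1

/-- step-down rejection count. -/
noncomputable def sdCount {n : ℕ} (c : Fin n → ℝ) (p : Fin n → ℝ) : ℕ :=
  (Finset.univ.filter fun k : Fin n =>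
    ∀ j : Fin n, j ≤ k → j.1 + 1 ≤ countLe p (c j)).sup fun k => k.1 + 1

/-- the critical value `c_{R:n}`, with the convention `c_{0:n} = 0`. -/
noncomputable def threshold {n : ℕ} (c : Fin n → ℝ) (R : ℕ) : ℝ :=
  if h : 0 < R ∧ R ≤ n then c ⟨R - 1, by omega⟩ else 0

/-- the σ-algebra generated by `(F̂_n(t))_{t ≥ λ}`. -/
noncomputable def ecdfSigma {Ω : Type*} [MeasurableSpace Ω] {n : ℕ}
    (p : Fin n → Ω → ℝ) (lam : ℝ) : MeasurableSpace Ω :=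
  MeasurableSpace.comap
    (fun ω => fun t : Set.Ici lam => (countLe (fun i => p i ω) (t : ℝ) : ℝ))
    MeasurableSpace.pi

/-! Leave-one-out argument. Let `R⁽ⁱ⁾` be the step-up count of the p-values with `pᵢ` replaced
by `0`. On the event `pᵢ ≤ c_k` one has `R = k + 1 ↔ R⁽ⁱ⁾ = k + 1`, so
`V / max(R, 1) = ∑ᵢ ∑ₖ 1{pᵢ ≤ c_k, R⁽ⁱ⁾ = k + 1} / (k + 1)`. As `R⁽ⁱ⁾` is independent of `pᵢ`,
the expectation is `∑ᵢ ∑ₖ c_k / (k + 1) · P(R⁽ⁱ⁾ = k + 1)`. For BH, `c_k / (k + 1) = α / n`,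
and `R⁽ⁱ⁾ ≥ 1` always, so each inner sum of probabilities is `1` and the total is `α`. -/

section StepUp

variable {n : ℕ}

lemma countLe_cast_eq_sum (p : Fin n → ℝ) (t : ℝ) :
    (countLe p t : ℝ) = ∑ i, if p i ≤ t then (1 : ℝ) else 0 := by
  simp [countLe]

lemma measurable_countLe (t : ℝ) : Measurable fun p : Fin n → ℝ => countLe p t := by
  simp only [countLe, Finset.card_filter]
  exact Finset.measurable_sum _ fun i _ =>
    Measurable.ite (measurableSet_le (measurable_pi_apply i) measurable_const)
      measurable_const measurable_const

lemma measurable_suCount (c : Fin n → ℝ) : Measurable (suCount c) :=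
  (Measurable.of_discrete (f := fun v : Fin n → ℕ =>
      (univ.filter fun k : Fin n => k.1 + 1 ≤ v k).sup fun k => k.1 + 1)).comp
    (measurable_pi_lambda _ fun k => measurable_countLe (c k))

lemma suCount_le (c p : Fin n → ℝ) : suCount c p ≤ n :=
  Finset.sup_le fun k _ => k.2

lemma succ_le_suCount {c p : Fin n → ℝ} {k : Fin n} (hk : k + 1 ≤ countLe p (c k)) :
    k + 1 ≤ suCount c p :=
  le_sup (f := fun k : Fin n => k.1 + 1) (mem_filter.2 ⟨mem_univ _, hk⟩)

lemma suCount_eq_succ_iff (c p : Fin n → ℝ) (k : Fin n) :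
    suCount c p = k + 1 ↔
      k + 1 ≤ countLe p (c k) ∧ ∀ j : Fin n, j + 1 ≤ countLe p (c j) → j ≤ k := by
  constructor
  · intro h
    have hne : (univ.filter fun j : Fin n => j.1 + 1 ≤ countLe p (c j)).Nonempty := by
      by_contra hne
      rw [suCount, not_nonempty_iff_eq_empty.1 hne] at h
      simp at h
    obtain ⟨j, hj, hjR⟩ := exists_mem_eq_sup _ hne fun k : Fin n => k.1 + 1
    obtain rfl : j = k := Fin.ext (by rw [suCount] at h; omega)
    refine ⟨(mem_filter.1 hj).2, fun j' hj' => ?_⟩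
    have := succ_le_suCount hj'
    rw [Fin.le_def]
    omega
  · rintro ⟨hk, hmax⟩
    refine le_antisymm (Finset.sup_le fun j hj => ?_) (succ_le_suCount hk)
    have := hmax j (mem_filter.1 hj).2
    rw [Fin.le_def] at this
    omega

lemma one_le_suCount_of_le {c p : Fin n → ℝ} {i : Fin n} (h : p i ≤ c ⟨0, i.pos⟩) :
    1 ≤ suCount c p :=
  succ_le_suCount (k := ⟨0, i.pos⟩) (card_pos.2 ⟨i, by simp [h]⟩)

lemma countLe_update_of_le {p : Fin n → ℝ} {i : Fin n} {b t : ℝ} (hb : b ≤ t) (hi : p i ≤ t) :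
    countLe (Function.update p i b) t = countLe p t := by
  unfold countLe
  congr 1
  refine filter_congr fun j _ => ?_
  by_cases hj : j = i
  · subst hj; simp [hb, hi]
  · simp [Function.update_of_ne hj]

lemma countLe_le_countLe_update (p : Fin n → ℝ) (i : Fin n) {b t : ℝ} (hb : b ≤ t) :
    countLe p t ≤ countLe (Function.update p i b) t := by
  refine card_le_card fun j hj => ?_
  by_cases hji : j = i
  · subst hji; simp [hb]
  · simpa [Function.update_of_ne hji] using hj

lemma suCount_update_eq_succ_iff {c p : Fin n → ℝ} {b : ℝ} (hb : ∀ j, b ≤ c j) (hc : Monotone c)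
    {i k : Fin n} (hi : p i ≤ c k) :
    suCount c (Function.update p i b) = k + 1 ↔ suCount c p = k + 1 := by
  have countLe_eq : ∀ j, k ≤ j → countLe (Function.update p i b) (c j) = countLe p (c j) :=
    fun j hkj => countLe_update_of_le (hb j) (hi.trans (hc hkj))
  rw [suCount_eq_succ_iff, suCount_eq_succ_iff, countLe_eq k le_rfl]
  refine and_congr_right fun _ => ⟨fun h j hj => h j (hj.trans ?_), fun h j hj => ?_⟩
  · exact countLe_le_countLe_update p i (hb j)
  · by_contra hjk
    exact hjk (h j (by rwa [← countLe_eq j (le_of_not_ge hjk)]))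

lemma threshold_succ (c : Fin n → ℝ) (k : Fin n) : threshold c (k + 1) = c k := by
  simp [threshold, k.2]

noncomputable def stepUpFDP (c p : Fin n → ℝ) : ℝ :=
  (countLe p (threshold c (suCount c p)) : ℝ) / (max (suCount c p) 1 : ℕ)

lemma stepUpFDP_eq_sum {c : Fin n → ℝ} (hc0 : ∀ j, 0 ≤ c j) (hc : Monotone c) (p : Fin n → ℝ) :
    stepUpFDP c p = ∑ i, ∑ k : Fin n, ((k : ℝ) + 1)⁻¹ *
      if p i ≤ c k ∧ suCount c (Function.update p i 0) = k + 1 then 1 else 0 := by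
  rw [stepUpFDP, countLe_cast_eq_sum, div_eq_mul_inv, mul_comm, mul_sum]
  refine sum_congr rfl fun i _ => ?_
  have leave_one_out : ∀ k : Fin n, (p i ≤ c k ∧ suCount c (Function.update p i 0) = k + 1) ↔
      (p i ≤ c k ∧ suCount c p = k + 1) :=
    fun k => and_congr_right (suCount_update_eq_succ_iff hc0 hc)
  simp only [leave_one_out]
  rcases Nat.eq_zero_or_pos (suCount c p) with hR | hR
  · have hi : ¬ p i ≤ 0 := fun hi => by
      have := one_le_suCount_of_le (hi.trans (hc0 ⟨0, i.pos⟩)); omega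
    simp [hR, threshold, hi]
  · obtain ⟨k₀, hk₀⟩ : ∃ k₀ : Fin n, suCount c p = k₀ + 1 :=
      ⟨⟨suCount c p - 1, by have := suCount_le c p; omega⟩, by simp; omega⟩
    have hk : ∀ k : Fin n, (suCount c p = k + 1) ↔ k₀ = k := fun k => by
      rw [hk₀, Fin.ext_iff]; omega
    simp only [hk]
    rw [sum_eq_single k₀ (fun k _ hne => by simp [Ne.symm hne]) (by simp), hk₀, threshold_succ]
    simp

end StepUp

section Probability

variable {Ω : Type*} [MeasurableSpace Ω] {μ : Measure Ω} {n : ℕ}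

lemma ProbabilityTheory.iIndepFun.indepFun_update {ι β : Type*} [Fintype ι] [DecidableEq ι]
    [MeasurableSpace β] {X : ι → Ω → β} (h : iIndepFun X μ) (hX : ∀ i, Measurable (X i))
    (i : ι) (b : β) :
    IndepFun (X i) (fun ω => Function.update (fun j => X j ω) i b) μ := by
  have hψ : Measurable fun (q : ({i}ᶜ : Finset ι) → β) (j : ι) =>
      if hj : j ∈ ({i}ᶜ : Finset ι) then q ⟨j, hj⟩ else b := by
    refine measurable_pi_lambda _ fun j => ?_
    by_cases hj : j ∈ ({i}ᶜ : Finset ι)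
    · simpa [hj] using measurable_pi_apply (⟨j, hj⟩ : ({i}ᶜ : Finset ι))
    · simp [hj]
  convert (h.indepFun_finset {i} {i}ᶜ disjoint_compl_right hX).comp
    (measurable_pi_apply ⟨i, mem_singleton_self i⟩) hψ using 1
  · rfl
  funext ω j
  by_cases hj : j = i
  · subst hj; simp
  · simp [hj]

lemma measureReal_setOf_le_of_map_eq_uniform {X : Ω → ℝ} (hX : Measurable X)
    (hunif : μ.map X = volume.restrict (Set.Ioo 0 1)) {t : ℝ} (ht0 : 0 ≤ t) (ht1 : t ≤ 1) :
    μ.real {ω | X ω ≤ t} = t := by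
  have hμ : μ {ω | X ω ≤ t} = volume (Set.Iic t ∩ Set.Ioo 0 1) := by
    rw [← Measure.restrict_apply measurableSet_Iic, ← hunif,
      Measure.map_apply hX measurableSet_Iic]
    rfl
  have hvol : volume (Set.Iic t ∩ Set.Ioo 0 1) = ENNReal.ofReal t := by
    refine le_antisymm ?_ ?_
    · calc volume (Set.Iic t ∩ Set.Ioo 0 1) ≤ volume (Set.Ioc 0 t) :=
            measure_mono fun x hx => ⟨hx.2.1, hx.1⟩
        _ = ENNReal.ofReal t := by simp
    · calc ENNReal.ofReal t = volume (Set.Ioo 0 t) := by simp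
        _ ≤ volume (Set.Iic t ∩ Set.Ioo 0 1) :=
            measure_mono fun x hx => ⟨hx.2.le, hx.1, hx.2.trans_le ht1⟩
  rw [measureReal_def, hμ, hvol, ENNReal.toReal_ofReal ht0]

lemma measureReal_le_inter_update_preimage {ι β : Type*} [Fintype ι] [DecidableEq ι]
    [MeasurableSpace β] {U : ι → Ω → ℝ} (hmeas : ∀ i, Measurable (U i)) (hindep : iIndepFun U μ)
    {i : ι} (hunif : μ.map (U i) = volume.restrict (Set.Ioo 0 1)) {t : ℝ} (ht0 : 0 ≤ t)
    (ht1 : t ≤ 1) (b : ℝ) {g : (ι → ℝ) → β} (hg : Measurable g) {s : Set β}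
    (hs : MeasurableSet s) :
    μ.real ({ω | U i ω ≤ t} ∩ {ω | g (Function.update (fun j => U j ω) i b) ∈ s}) =
      t * μ.real {ω | g (Function.update (fun j => U j ω) i b) ∈ s} := by
  have hind := ((hindep.indepFun_update hmeas i b).comp measurable_id hg)
    |>.measure_inter_preimage_eq_mul _ _ (measurableSet_Iic (a := t)) hs
  conv_rhs => rw [← measureReal_setOf_le_of_map_eq_uniform (hmeas i) hunif ht0 ht1]
  simp only [measureReal_def, ← ENNReal.toReal_mul]
  exact congrArg ENNReal.toReal hind

lemma measurable_suCount_update (c : Fin n → ℝ) {U : Fin n → Ω → ℝ}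
    (hmeas : ∀ i, Measurable (U i)) (i : Fin n) (b : ℝ) :
    Measurable fun ω => suCount c (Function.update (fun j => U j ω) i b) :=
  (measurable_suCount c).comp (measurable_update_left.comp (measurable_pi_lambda _ hmeas))

theorem integral_stepUpFDP [IsFiniteMeasure μ] {U : Fin n → Ω → ℝ}
    (hmeas : ∀ i, Measurable (U i)) (hindep : iIndepFun U μ)
    (hunif : ∀ i, μ.map (U i) = volume.restrict (Set.Ioo 0 1)) {c : Fin n → ℝ}
    (hc0 : ∀ k, 0 ≤ c k) (hc1 : ∀ k, c k ≤ 1) (hc : Monotone c) :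
    ∫ ω, stepUpFDP c (fun i => U i ω) ∂μ = ∑ i, ∑ k : Fin n,
      c k / (k + 1) * μ.real {ω | suCount c (Function.update (fun j => U j ω) i 0) = k + 1} := by
  set A : Fin n → Fin n → Set Ω := fun i k =>
    {ω | U i ω ≤ c k} ∩
      {ω | suCount c (Function.update (fun j => U j ω) i 0) ∈ ({(k + 1 : ℕ)} : Set ℕ)}
  have hA : ∀ i k, MeasurableSet (A i k) := fun i k =>
    (measurableSet_le (hmeas i) measurable_const).inter
      (measurable_suCount_update c hmeas i 0 (measurableSet_singleton _))
  have hpoint : ∀ ω, stepUpFDP c (fun i => U i ω) =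
      ∑ i, ∑ k : Fin n, ((k : ℝ) + 1)⁻¹ * (A i k).indicator 1 ω := fun ω => by
    simp [stepUpFDP_eq_sum hc0 hc, A, Set.indicator_apply]
  simp_rw [hpoint]
  rw [integral_finsetSum _ fun i _ => integrable_finsetSum _ fun k _ =>
    ((integrable_const 1).indicator (hA i k)).const_mul _]
  refine sum_congr rfl fun i _ => ?_
  rw [integral_finsetSum _ fun k _ => ((integrable_const 1).indicator (hA i k)).const_mul _]
  refine sum_congr rfl fun k _ => ?_
  rw [integral_const_mul, integral_indicator_one (hA i k),
    measureReal_le_inter_update_preimage hmeas hindep (hunif i) (hc0 k) (hc1 k) 0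
      (measurable_suCount c) (measurableSet_singleton _)]
  simp [div_eq_inv_mul, mul_assoc]

lemma sum_measureReal_setOf_eq_succ [IsProbabilityMeasure μ] {N : Ω → ℕ} (hN : Measurable N)
    (h1 : ∀ ω, 1 ≤ N ω) (hn : ∀ ω, N ω ≤ n) :
    ∑ k : Fin n, μ.real {ω | N ω = k + 1} = 1 := by
  have hcover : N ⁻¹' ↑(Ico 1 (n + 1)) = Set.univ :=
    Set.eq_univ_of_forall fun ω => by simpa using ⟨h1 ω, hn ω⟩
  rw [Fin.sum_univ_eq_sum_range (fun k => μ.real {ω | N ω = k + 1}), ← probReal_univ (μ := μ),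
    ← hcover, ← sum_measureReal_preimage_singleton _ fun r _ => hN (measurableSet_singleton r),
    sum_Ico_eq_sum_range]
  simp only [add_tsub_cancel_right, add_comm 1]
  rfl

end Probability

noncomputable def bhCritical (n : ℕ) (a : ℝ) (k : Fin n) : ℝ :=
  (k + 1 : ℝ) / n * a

section BH

variable {n : ℕ} {a : ℝ}

lemma bhCritical_monotone (ha : 0 ≤ a) : Monotone (bhCritical n a) := fun j k hjk => by
  unfold bhCritical
  gcongr
  exact_mod_cast hjk

lemma bhCritical_nonneg (ha : 0 ≤ a) (k : Fin n) : 0 ≤ bhCritical n a k := by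
  unfold bhCritical; positivity

lemma bhCritical_le_one (ha0 : 0 ≤ a) (ha1 : a ≤ 1) (k : Fin n) : bhCritical n a k ≤ 1 := by
  have hk : (k : ℝ) + 1 ≤ n := by exact_mod_cast k.2
  exact mul_le_one₀ (div_le_one_of_le₀ hk (Nat.cast_nonneg n)) ha0 ha1

lemma bhCritical_div_succ (k : Fin n) : bhCritical n a k / (k + 1) = a / n := by
  unfold bhCritical
  field_simp

lemma threshold_bhCritical {r : ℕ} (hr : r ≤ n) : threshold (bhCritical n a) r = r / n * a := by
  rcases Nat.eq_zero_or_pos r with rfl | hr0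
  · simp [threshold]
  · simp [threshold, bhCritical, hr0, hr]

end BH

/-- For `n` i.i.d. uniform(0,1) p-values (all hypotheses true), the BH step-up test with
critical values `α_{i:n} = (i/n)α` has `E[V / max(R,1)] = α`. -/
theorem bh_fdr_all_true {Ω : Type*} [MeasurableSpace Ω]
    (μ : Measure Ω) [IsProbabilityMeasure μ] {m : ℕ}
    (U : Fin (m + 1) → Ω → ℝ) (hmeas : ∀ i, Measurable (U i))
    (hindep : iIndepFun U μ)
    (hunif : ∀ i, Measure.map (U i) μ = volume.restrict (Set.Ioo (0 : ℝ) 1))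
    (a : ℝ) (ha : a ∈ Set.Ioo (0 : ℝ) 1) :
    ∫ ω,
        (countLe (fun i => U i ω)
            ((suCount (fun i : Fin (m + 1) => ((i.1 + 1 : ℝ) / (m + 1)) * a)
                (fun i => U i ω) : ℝ) / (m + 1) * a) : ℝ)
          / (max (suCount (fun i : Fin (m + 1) => ((i.1 + 1 : ℝ) / (m + 1)) * a)
              (fun i => U i ω)) 1 : ℕ) ∂μ
      = a := by
  obtain ⟨ha0, ha1⟩ := ha
  have hc : (fun i : Fin (m + 1) => ((i.1 + 1 : ℝ) / (m + 1)) * a) = bhCritical (m + 1) a := by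
    funext i; simp [bhCritical]
  have hfdp : ∀ ω, (countLe (fun i => U i ω)
      ((suCount (bhCritical (m + 1) a) (fun i => U i ω) : ℝ) / (m + 1) * a) : ℝ) /
        (max (suCount (bhCritical (m + 1) a) (fun i => U i ω)) 1 : ℕ) =
      stepUpFDP (bhCritical (m + 1) a) (fun i => U i ω) := fun ω => by
    rw [stepUpFDP, threshold_bhCritical (suCount_le _ _)]
    push_cast
    rfl
  have hsum : ∀ i, ∑ k : Fin (m + 1), μ.real
      {ω | suCount (bhCritical (m + 1) a) (Function.update (fun j => U j ω) i 0) = k + 1} = 1 :=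
    fun i => sum_measureReal_setOf_eq_succ (measurable_suCount_update _ hmeas i 0)
      (fun ω => one_le_suCount_of_le (i := i) (by simpa using bhCritical_nonneg ha0.le _))
      (fun ω => suCount_le _ _)
  simp_rw [hc, hfdp]
  rw [integral_stepUpFDP hmeas hindep hunif (bhCritical_nonneg ha0.le)
    (bhCritical_le_one ha0.le ha1.le) (bhCritical_monotone ha0.le)]
  simp_rw [bhCritical_div_succ, ← mul_sum, hsum]
  simp
  field_simp
end

section
/- Under the BI Model with 0 < λ ≤ λ1 < γ1 ≤ 1, conditionally on the number n0(γ1) of true p-values ≤ γ1 (true p-values being conditionally i.i.d. uniform on (0,γ1)), it holds that E[V(λ) / (n0(γ1) + 1 - V(λ1))] = (λ/(γ1-λ1)) · (1 - (λ1/γ1)^{n0(γ1)}) ≤ λ/(γ1 - λ1), where V(t) counts true p-values ≤ t. -/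
open MeasureTheory ProbabilityTheory Finset
open scoped Classical

/-!
Sort each p-value into one of the cells `(0, λ]`, `(λ, λ₁]`, `(λ₁, γ₁)`. By independence the
vector of cell labels is multinomial with cell probabilities `p₀ = λ/γ₁`,
`p₁ = (λ₁-λ)/γ₁`, `p₂ = (γ₁-λ₁)/γ₁`, and in terms of the cell counts the integrand is
`V₀/(V₂+1)`. Writing `1/(V₂+1) = ∫₀¹ t^V₂ dt` turns the expectation into
`∫₀¹ E[V₀ t^V₂] dt`, where `E[V₀ t^V₂] = M p₀ (p₀ + p₁ + p₂ t)^(M-1)`; integrating gives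
`(p₀/p₂)(1 - (p₀+p₁)^M)`.
-/

theorem sum_card_filter_eq_mul_prod {ι α R : Type*} [Fintype ι] [DecidableEq ι] [Fintype α]
    [DecidableEq α] [CommSemiring R] (f : α → R) (a : α) :
    ∑ y : ι → α, (#{i | y i = a} : R) * ∏ i, f (y i)
      = Fintype.card ι * f a * (∑ v, f v) ^ (Fintype.card ι - 1) := by
  simp_rw [natCast_card_filter, sum_mul]
  rw [sum_comm]
  have hslot : ∀ i : ι, ∑ y : ι → α, (if y i = a then (1 : R) else 0) * ∏ j, f (y j)
      = f a * (∑ v, f v) ^ (Fintype.card ι - 1) := by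
    intro i
    -- replacing the `i`-th factor by `[v = a] f v` leaves a product of sums
    set g : ι → α → R := fun j v => if j = i ∧ v ≠ a then 0 else f v
    have hg : ∀ y : ι → α,
        (if y i = a then (1 : R) else 0) * ∏ j, f (y j) = ∏ j, g j (y j) := by
      intro y
      by_cases hy : y i = a
      · rw [if_pos hy, one_mul]
        exact prod_congr rfl fun j _ => by grind
      · rw [if_neg hy, zero_mul]
        exact (prod_eq_zero (mem_univ i) (by simp [g, hy])).symm
    have hsum : ∀ j, ∑ v, g j v = if j = i then f a else ∑ v, f v := by
      intro j
      by_cases hj : j = i <;> simp [g, hj]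
    simp_rw [hg, ← Fintype.prod_sum, hsum, Fintype.prod_eq_mul_prod_compl i, if_pos]
    rw [prod_ite_of_false fun j hj => by simpa using hj, prod_const, card_compl,
      card_singleton]
  simp_rw [hslot, sum_const, card_univ, nsmul_eq_mul, mul_assoc]

theorem prod_update_mul_pow {ι α R : Type*} [Fintype ι] [DecidableEq α] [CommMonoid R]
    (f : α → R) (b : α) (t : R) (y : ι → α) :
    ∏ i, Function.update f b (f b * t) (y i) = (∏ i, f (y i)) * t ^ #{i | y i = b} := by
  have hfactor : ∀ i,
      Function.update f b (f b * t) (y i) = f (y i) * if y i = b then t else 1 := by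
    intro i
    by_cases h : y i = b <;> simp [h]
  rw [prod_congr rfl fun i _ => hfactor i, prod_mul_distrib, prod_ite, prod_const, prod_const_one,
    mul_one]

theorem sum_prod_mul_card_div_card_succ {ι α : Type*} [Fintype ι] [DecidableEq ι] [Fintype α]
    [DecidableEq α] {a b : α} (hab : a ≠ b) (f : α → ℝ) (hb : f b ≠ 0) :
    ∑ y : ι → α, (∏ i, f (y i)) * ((#{i | y i = a} : ℝ) / (#{i | y i = b} + 1))
      = f a / f b
        * ((∑ v, f v) ^ Fintype.card ι - (∑ v ∈ {b}ᶜ, f v) ^ Fintype.card ι) := by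
  set n := Fintype.card ι
  set s := ∑ v ∈ {b}ᶜ, f v with hs
  have hdiv_eq_integral : ∀ y : ι → α,
      (∏ i, f (y i)) * ((#{i | y i = a} : ℝ) / (#{i | y i = b} + 1))
        = ∫ t in (0 : ℝ)..1, #{i | y i = a} * ((∏ i, f (y i)) * t ^ #{i | y i = b}) := by
    intro y
    simp only [intervalIntegral.integral_const_mul, integral_pow]
    field_simp
    simp
  have hgenerating : ∀ t : ℝ,
      ∑ y : ι → α, #{i | y i = a} * ((∏ i, f (y i)) * t ^ #{i | y i = b})
        = f a / f b * (n * (s + f b * t) ^ (n - 1) * f b) := by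
    intro t
    simp_rw [← prod_update_mul_pow, sum_card_filter_eq_mul_prod,
      Function.update_of_ne hab, sum_update_of_mem (mem_univ b), ← compl_eq_univ_sdiff, ← hs]
    field_simp
    ring
  have hderiv : ∀ t : ℝ,
      HasDerivAt (fun t => (s + f b * t) ^ n) (n * (s + f b * t) ^ (n - 1) * f b) t := fun t => by
    simpa using ((hasDerivAt_id t).const_mul (f b)).const_add s |>.fun_pow n
  rw [sum_congr rfl fun y _ => hdiv_eq_integral y, ← intervalIntegral.integral_finsetSum
      fun y _ => (by fun_prop : Continuous _).intervalIntegrable _ _]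
  simp_rw [hgenerating]
  rw [intervalIntegral.integral_const_mul,
    intervalIntegral.integral_eq_sub_of_hasDerivAt (fun t _ => hderiv t)
      ((by fun_prop : Continuous _).intervalIntegrable _ _),
    Fintype.sum_eq_add_sum_compl b, ← hs]
  ring

theorem sum_multinomial_card_div_card_succ {M : ℕ} (p : Fin 3 → ℝ) (hp : ∑ v, p v = 1)
    (hp2 : p 2 ≠ 0) :
    ∑ y : Fin M → Fin 3, (∏ i, p (y i)) * ((#{i | y i = 0} : ℝ) / (#{i | y i = 2} + 1))
      = p 0 / p 2 * (1 - (p 0 + p 1) ^ M) := by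
  rw [sum_prod_mul_card_div_card_succ (by decide) p hp2, hp, one_pow, Fintype.card_fin,
    show ({2}ᶜ : Finset (Fin 3)) = {0, 1} by decide, sum_pair (by decide)]

theorem integral_pi_eq_sum_prod {ι α : Type*} [Fintype ι] [DecidableEq ι] [Fintype α]
    [MeasurableSpace α] [MeasurableSingletonClass α] (ν : ι → Measure α)
    [∀ i, IsFiniteMeasure (ν i)] (G : (ι → α) → ℝ) :
    ∫ y, G y ∂Measure.pi ν = ∑ y, (∏ i, (ν i).real {y i}) * G y := by
  rw [integral_fintype .of_finite]
  refine sum_congr rfl fun y _ => ?_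
  rw [← Set.univ_pi_singleton, measureReal_def, Measure.pi_pi, ENNReal.toReal_prod, smul_eq_mul]
  rfl

theorem integral_comp_eq_sum_prod_of_iIndepFun {Ω ι β α : Type*} [MeasurableSpace Ω]
    {μ : Measure Ω} [Fintype ι] [DecidableEq ι] [MeasurableSpace β] [Fintype α]
    [MeasurableSpace α] [MeasurableSingletonClass α] {q : ι → Ω → β} (hq : ∀ i, Measurable (q i))
    (hind : iIndepFun q μ) {ν : Measure β} [IsFiniteMeasure ν] (hν : ∀ i, μ.map (q i) = ν)
    {g : β → α} (hg : Measurable g) (G : (ι → α) → ℝ) :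
    ∫ ω, G (fun i => g (q i ω)) ∂μ = ∑ y, (∏ i, ν.real (g ⁻¹' {y i})) * G y := by
  have hgq : ∀ i, Measurable fun ω => g (q i ω) := fun i => hg.comp (hq i)
  have hlaw : μ.map (fun ω i => g (q i ω)) = Measure.pi fun _ => ν.map g := by
    rw [(hind.comp _ fun _ => hg).map_fun_eq_pi_map fun i => (hgq i).aemeasurable]
    congr with i : 1
    rw [← hν i, Measure.map_map hg (hq i)]
    rfl
  rw [← integral_map (φ := fun ω i => g (q i ω))
    (measurable_pi_lambda _ hgq).aemeasurable
    (measurable_of_finite G).aestronglyMeasurable, hlaw, integral_pi_eq_sum_prod]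
  simp_rw [map_measureReal_apply hg (measurableSet_singleton _)]

theorem smul_restrict_Ioo_eq_cond {γ : ℝ} :
    (ENNReal.ofReal γ)⁻¹ • volume.restrict (Set.Ioo 0 γ) = volume[|Set.Ioo 0 γ] := by
  rw [ProbabilityTheory.cond, Real.volume_Ioo, sub_zero]

noncomputable def binIndex (lam lam1 x : ℝ) : Fin 3 :=
  if x ≤ lam then 0 else if x ≤ lam1 then 1 else 2

section
variable {lam lam1 : ℝ}

theorem measurable_binIndex : Measurable (binIndex lam lam1) :=
  Measurable.ite measurableSet_Iic measurable_const
    (Measurable.ite measurableSet_Iic measurable_const measurable_const)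

theorem binIndex_preimage_zero : binIndex lam lam1 ⁻¹' {0} = Set.Iic lam := by
  ext x
  simp only [Set.mem_preimage, binIndex, Set.mem_singleton_iff]
  split_ifs <;> grind

theorem binIndex_preimage_one : binIndex lam lam1 ⁻¹' {1} = Set.Ioc lam lam1 := by
  ext x
  simp only [Set.mem_preimage, binIndex, Set.mem_singleton_iff]
  split_ifs <;> grind

theorem binIndex_preimage_two (h : lam ≤ lam1) : binIndex lam lam1 ⁻¹' {2} = Set.Ioi lam1 := by
  ext x
  simp only [Set.mem_preimage, binIndex, Set.mem_singleton_iff]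
  split_ifs <;> grind

theorem cond_Ioo_real_binIndex_preimage {gam : ℝ} (h0 : 0 ≤ lam) (h1 : lam ≤ lam1)
    (h2 : lam1 < gam) (v : Fin 3) :
    (volume[|Set.Ioo 0 gam]).real (binIndex lam lam1 ⁻¹' {v})
      = ![lam / gam, (lam1 - lam) / gam, (gam - lam1) / gam] v := by
  rw [measureReal_def, cond_apply measurableSet_Ioo, ENNReal.toReal_mul, ENNReal.toReal_inv]
  simp only [← measureReal_def]
  rw [Real.volume_real_Ioo_of_le (by linarith), sub_zero]
  fin_cases v
  · have : Set.Ioo 0 gam ∩ Set.Iic lam = Set.Ioc 0 lam := by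
      ext x; simp only [Set.mem_inter_iff, Set.mem_Ioo, Set.mem_Iic, Set.mem_Ioc]; grind
    simp [binIndex_preimage_zero, this, Real.volume_real_Ioc_of_le h0, div_eq_inv_mul]
  · have : Set.Ioo 0 gam ∩ Set.Ioc lam lam1 = Set.Ioc lam lam1 := by
      ext x; simp only [Set.mem_inter_iff, Set.mem_Ioo, Set.mem_Ioc]; grind
    simp [binIndex_preimage_one, this, Real.volume_real_Ioc_of_le h1, div_eq_inv_mul]
  · have : Set.Ioo 0 gam ∩ Set.Ioi lam1 = Set.Ioo lam1 gam := by
      ext x; simp only [Set.mem_inter_iff, Set.mem_Ioo, Set.mem_Ioi]; grind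
    simp [binIndex_preimage_two h1, this, Real.volume_real_Ioo_of_le h2.le, div_eq_inv_mul]

theorem countLe_eq_card_binIndex_eq_zero {n : ℕ} (p : Fin n → ℝ) :
    countLe p lam = #{i | binIndex lam lam1 (p i) = 0} := by
  unfold countLe
  congr 1
  exact filter_congr fun i _ => (Set.ext_iff.1 binIndex_preimage_zero (p i)).symm

theorem countLe_add_card_binIndex_eq_two {n : ℕ} (h : lam ≤ lam1) (p : Fin n → ℝ) :
    countLe p lam1 + #{i | binIndex lam lam1 (p i) = 2} = n := by
  have : univ.filter (fun i => binIndex lam lam1 (p i) = 2) = univ.filter (¬ p · ≤ lam1) :=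
    filter_congr fun i _ =>
      (Set.ext_iff.1 (binIndex_preimage_two h) (p i)).trans (Set.mem_Ioi.trans not_le.symm)
  rw [countLe, this, card_filter_add_card_filter_not, card_univ, Fintype.card_fin]

theorem countLe_div_eq_card_binIndex {n : ℕ} (h : lam ≤ lam1) (p : Fin n → ℝ) :
    (countLe p lam : ℝ) / (n + 1 - countLe p lam1)
      = (#{i | binIndex lam lam1 (p i) = 0} : ℝ) / (#{i | binIndex lam lam1 (p i) = 2} + 1) := by
  have hn : (n : ℝ) = countLe p lam1 + #{i | binIndex lam lam1 (p i) = 2} := by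
    exact_mod_cast (countLe_add_card_binIndex_eq_two h p).symm
  rw [countLe_eq_card_binIndex_eq_zero (lam1 := lam1), hn]
  congr 1
  ring

end

theorem conditional_multinomial_bound_general {Ω : Type*} [MeasurableSpace Ω]
    (μ : Measure Ω) {M : ℕ}
    (lam lam1 gam1 : ℝ) (h0 : 0 < lam) (h1 : lam ≤ lam1) (h2 : lam1 < gam1)
    (q : Fin M → Ω → ℝ) (hmeas : ∀ i, Measurable (q i))
    (hindep : iIndepFun q μ)
    (hunif : ∀ i, Measure.map (q i) μ
      = (ENNReal.ofReal gam1)⁻¹ • volume.restrict (Set.Ioo (0 : ℝ) gam1)) :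
    (∫ ω, (countLe (fun i => q i ω) lam : ℝ)
        / ((M : ℝ) + 1 - (countLe (fun i => q i ω) lam1 : ℝ)) ∂μ
      = lam / (gam1 - lam1) * (1 - (lam1 / gam1) ^ M)) ∧
    ∫ ω, (countLe (fun i => q i ω) lam : ℝ)
        / ((M : ℝ) + 1 - (countLe (fun i => q i ω) lam1 : ℝ)) ∂μ
      ≤ lam / (gam1 - lam1) := by
  have hgam1 : 0 < gam1 := by linarith
  have hE : ∫ ω, (countLe (fun i => q i ω) lam : ℝ)
        / ((M : ℝ) + 1 - (countLe (fun i => q i ω) lam1 : ℝ)) ∂μ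
      = lam / (gam1 - lam1) * (1 - (lam1 / gam1) ^ M) := by
    simp_rw [countLe_div_eq_card_binIndex h1]
    rw [integral_comp_eq_sum_prod_of_iIndepFun hmeas hindep
      (fun i => (hunif i).trans smul_restrict_Ioo_eq_cond) measurable_binIndex
      fun y => (#{i | y i = 0} : ℝ) / (#{i | y i = 2} + 1)]
    simp_rw [cond_Ioo_real_binIndex_preimage h0.le h1 h2]
    rw [sum_multinomial_card_div_card_succ _ ?_ (div_ne_zero (sub_ne_zero.2 h2.ne') hgam1.ne')]
    all_goals
      simp only [Fin.sum_univ_three, Matrix.cons_val_zero, Matrix.cons_val_one,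
        Matrix.cons_val_two, Matrix.head_cons, Matrix.tail_cons]
      field_simp
      ring
  refine ⟨hE, hE ▸ mul_le_of_le_one_right (div_nonneg h0.le (by linarith)) ?_⟩
  exact sub_le_self _ (pow_nonneg (div_nonneg (h0.le.trans h1) hgam1.le) M)

/-- Conditionally on `n₀(γ₁) = M` true p-values being i.i.d. uniform on `(0, γ₁)`
(with `0 < λ ≤ λ₁ < γ₁ ≤ 1`), one has
`E[V(λ)/(M + 1 - V(λ₁))] = (λ/(γ₁-λ₁))·(1 - (λ₁/γ₁)^M) ≤ λ/(γ₁-λ₁)`,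
where `V(t)` counts the true p-values `≤ t`. -/
theorem conditional_multinomial_bound {Ω : Type*} [MeasurableSpace Ω]
    (μ : Measure Ω) [IsProbabilityMeasure μ] {M : ℕ}
    (lam lam1 gam1 : ℝ) (h0 : 0 < lam) (h1 : lam ≤ lam1) (h2 : lam1 < gam1) (h3 : gam1 ≤ 1)
    (q : Fin M → Ω → ℝ) (hmeas : ∀ i, Measurable (q i))
    (hindep : iIndepFun q μ)
    (hunif : ∀ i, Measure.map (q i) μ
      = (ENNReal.ofReal gam1)⁻¹ • volume.restrict (Set.Ioo (0 : ℝ) gam1)) :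
    (∫ ω, (countLe (fun i => q i ω) lam : ℝ)
        / ((M : ℝ) + 1 - (countLe (fun i => q i ω) lam1 : ℝ)) ∂μ
      = lam / (gam1 - lam1) * (1 - (lam1 / gam1) ^ M)) ∧
    ∫ ω, (countLe (fun i => q i ω) lam : ℝ)
        / ((M : ℝ) + 1 - (countLe (fun i => q i ω) lam1 : ℝ)) ∂μ
      ≤ lam / (gam1 - lam1) :=
  conditional_multinomial_bound_general μ lam lam1 gam1 h0 h1 h2 q hmeas hindep hunif
end

section
/- Let p-values p1,...,pn consist of true p-values, i.i.d. uniform(0,1) and independent of the false p-values, and consider the BH step-down test with critical values α_{i:n} = (i/n)α for arbitrary α > 0: R_SD = max{i : p_{j:n} ≤ α_{j:n} ∀ j ≤ i}, V_SD = #{true p-values ≤ α_{R_SD:n}}. Then E[V_SD/max(R_SD,1)] ≤ (E[N_0]/n)·α, where N_0 is the number of true p-values. -/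
/-!
Write the false discovery proportion as a sum over the true nulls `i` of
`1{p_i ≤ α_{R:n}} / max(R, 1)`. If a true p-value `p_i > 0` is rejected, setting it to `0` does not
change `R`: the step-down procedure passes exactly the same steps. So the `i`-th term is at most
`1{U_i ≤ α_{R⁽ⁱ⁾:n}} / max(R⁽ⁱ⁾, 1)`, where `R⁽ⁱ⁾` is the rejection count with `p_i` replaced by
`0`. It is a function of `(U_j)_{j ≠ i}`, `H` and `ξ`, hence independent of `U_i`, and the uniform
`U_i` falls below `α_{R⁽ⁱ⁾:n} = R⁽ⁱ⁾ α / n` with probability at most `R⁽ⁱ⁾ α / n`; the factor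
`R⁽ⁱ⁾` cancels against `max(R⁽ⁱ⁾, 1)`. Summing over `i` gives `E[N₀] α / n`.
-/

open MeasureTheory ProbabilityTheory Finset
open scoped Classical

lemma countLe_le_countLe {n : ℕ} {p q : Fin n → ℝ} {t : ℝ} (h : ∀ i, p i ≤ t → q i ≤ t) :
    countLe p t ≤ countLe q t :=
  card_le_card (monotone_filter_right _ fun i _ hi => h i hi)

section StepDown

variable {n : ℕ} {c p : Fin n → ℝ}

lemma sdCount_le (c p : Fin n → ℝ) : sdCount c p ≤ n :=
  Finset.sup_le fun k _ => k.2

lemma lt_sdCount_iff {k : Fin n} :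
    k.1 < sdCount c p ↔ ∀ j : Fin n, j ≤ k → j.1 + 1 ≤ countLe p (c j) := by
  simp only [sdCount, Finset.lt_sup_iff, mem_filter, mem_univ, true_and]
  constructor
  · rintro ⟨l, hl, hkl⟩ j hj
    exact hl j (hj.trans (Fin.le_def.2 (Nat.lt_succ_iff.1 hkl)))
  · exact fun h => ⟨k, h, k.1.lt_succ_self⟩

lemma sdCount_le_sdCount {q : Fin n → ℝ} (h : ∀ i, q i ≤ p i) : sdCount c p ≤ sdCount c q :=
  Finset.sup_mono <| monotone_filter_right _ fun _ _ hk j hj =>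
    (hk j hj).trans (countLe_le_countLe fun i hi => (h i).trans hi)

lemma sdCount_update_of_le {i : Fin n} {x : ℝ} (hc : Monotone c) (hx : x ≤ p i) {k : Fin n}
    (hk : k.1 < sdCount c p) (hpk : p i ≤ c k) :
    sdCount c (Function.update p i x) = sdCount c p := by
  set q := Function.update p i x
  refine le_antisymm ?_ (sdCount_le_sdCount fun j => ?_)
  · by_contra! hlt
    -- `q` passes step `R`, the first one `p` fails; but `p i ≤ c k ≤ c R`, so `p` passes it too
    let K : Fin n := ⟨sdCount c p, hlt.trans_le (sdCount_le c q)⟩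
    have hK : K.1 < sdCount c p := by
      refine lt_sdCount_iff.2 fun j hj => ?_
      rcases (Fin.le_def.1 hj).lt_or_eq with hj | hj
      · exact lt_sdCount_iff.1 hj j le_rfl
      · have hj : j.1 = sdCount c p := hj
        have hpj : p i ≤ c j := hpk.trans (hc (Fin.le_def.2 (by omega)))
        refine (lt_sdCount_iff.1 (hj ▸ hlt : j.1 < sdCount c q) j le_rfl).trans
          (countLe_le_countLe fun r hr => ?_)
        rcases eq_or_ne r i with rfl | hri
        · exact hpj
        · simpa [q, hri] using hr
    exact lt_irrefl _ hK
  · rcases eq_or_ne j i with rfl | hji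
    · simpa [q] using hx
    · simp [q, hji]

lemma measurable_sdCount (c : Fin n → ℝ) : Measurable (sdCount c) := by
  let F : (Fin n → Fin n → Prop) → ℕ := fun b => (univ.filter fun k : Fin n =>
    ∀ j : Fin n, j ≤ k → j.1 + 1 ≤ (univ.filter fun i => b i j).card).sup fun k => k.1 + 1
  have hF : sdCount c = F ∘ fun p i j => p i ≤ c j := rfl
  rw [hF]
  refine (measurable_of_countable F).comp (measurable_pi_lambda _ fun i =>
    measurable_pi_lambda _ fun j => ?_)
  exact measurableSet_setOfPred.1 (measurableSet_le (measurable_pi_apply i) measurable_const)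

end StepDown

section Probability

variable {Ω α β γ : Type*} [MeasurableSpace Ω] [MeasurableSpace α] [MeasurableSpace β]
  [MeasurableSpace γ] {μ : Measure Ω} [IsFiniteMeasure μ]

lemma integrable_ite_div_max (ν : Measure α) [IsFiniteMeasure ν] {P : α → Prop} [DecidablePred P]
    (hP : MeasurableSet {x | P x}) {N : α → ℕ} (hN : Measurable N) :
    Integrable (fun x => (if P x then (1 : ℝ) else 0) / ((max (N x) 1 : ℕ) : ℝ)) ν := by
  have hm : Measurable fun x => (if P x then (1 : ℝ) else 0) / ((max (N x) 1 : ℕ) : ℝ) :=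
    (measurable_const.ite hP measurable_const).div
      ((measurable_from_nat (f := fun k : ℕ => ((max k 1 : ℕ) : ℝ))).comp hN)
  refine Integrable.mono' (integrable_const 1) hm.aestronglyMeasurable (ae_of_all _ fun x => ?_)
  have h1 : (1 : ℝ) ≤ ((max (N x) 1 : ℕ) : ℝ) := by exact_mod_cast le_max_right _ _
  rw [Real.norm_eq_abs, abs_div, abs_of_pos (one_pos.trans_le h1),
    div_le_one (one_pos.trans_le h1)]
  split_ifs <;> simp

namespace ProbabilityTheory

lemma IndepFun.indepFun_prodMk_of_indepFun_prodMk {A : Ω → α} {B : Ω → β} {C : Ω → γ}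
    (hA : Measurable A) (hB : Measurable B) (hC : Measurable C) (hAB : IndepFun A B μ)
    (hABC : IndepFun (fun ω => (A ω, B ω)) C μ) :
    IndepFun A (fun ω => (B ω, C ω)) μ := by
  have hBC : IndepFun B C μ := hABC.comp measurable_snd measurable_id
  rw [indepFun_iff_map_prod_eq_prod_map_map hA.aemeasurable (hB.prodMk hC).aemeasurable,
    (indepFun_iff_map_prod_eq_prod_map_map hB.aemeasurable hC.aemeasurable).1 hBC]
  have hABC' := (indepFun_iff_map_prod_eq_prod_map_map (hA.prodMk hB).aemeasurable
    hC.aemeasurable).1 hABC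
  rw [(indepFun_iff_map_prod_eq_prod_map_map hA.aemeasurable hB.aemeasurable).1 hAB] at hABC'
  calc μ.map (fun ω => (A ω, B ω, C ω))
      = (μ.map fun ω => ((A ω, B ω), C ω)).map MeasurableEquiv.prodAssoc := by
        rw [Measure.map_map MeasurableEquiv.prodAssoc.measurable ((hA.prodMk hB).prodMk hC)]
        rfl
    _ = _ := by rw [hABC', (measurePreserving_prodAssoc _ _ _).map_eq]

lemma IndepFun.integral_comp_eq_integral_integral {X : Ω → α} {Y : Ω → β}
    (hX : Measurable X) (hY : Measurable Y) (hXY : IndepFun X Y μ) {F : α × β → ℝ}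
    (hF : Integrable F ((μ.map X).prod (μ.map Y))) :
    ∫ ω, F (X ω, Y ω) ∂μ = ∫ y, ∫ x, F (x, y) ∂μ.map X ∂μ.map Y := by
  have hmap := (indepFun_iff_map_prod_eq_prod_map_map hX.aemeasurable hY.aemeasurable).1 hXY
  rw [← integral_prod_symm F hF, ← hmap,
    integral_map (hX.prodMk hY).aemeasurable (hmap ▸ hF.aestronglyMeasurable)]

end ProbabilityTheory

omit [IsFiniteMeasure μ] in
lemma measureReal_le_le_of_map_eq_uniform {X : Ω → ℝ} (hX : Measurable X)
    (hunif : μ.map X = volume.restrict (Set.Ioo 0 1)) {t : ℝ} (ht : 0 ≤ t) :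
    μ.real {ω | X ω ≤ t} ≤ t := by
  calc μ.real {ω | X ω ≤ t} = volume.real (Set.Iic t ∩ Set.Ioo 0 1) := by
        rw [← measureReal_restrict_apply measurableSet_Iic, ← hunif,
          map_measureReal_apply hX measurableSet_Iic]
        rfl
    _ ≤ volume.real (Set.Ioc 0 t) :=
        measureReal_mono (fun x hx => ⟨hx.2.1, hx.1⟩) measure_Ioc_lt_top.ne
    _ = t := by simp [Real.volume_real_Ioc, ht]

lemma ae_pos_of_measureReal_le_le {X : Ω → ℝ}
    (hX : ∀ t, 0 ≤ t → μ.real {ω | X ω ≤ t} ≤ t) : ∀ᵐ ω ∂μ, 0 < X ω := by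
  have h0 : μ.real {ω | X ω ≤ 0} = 0 := le_antisymm (hX 0 le_rfl) measureReal_nonneg
  simpa [ae_iff] using (measureReal_eq_zero_iff (measure_ne_top μ _)).1 h0

lemma integral_ite_le_mul_div_max_le {X : Ω → ℝ} {Y : Ω → β} (hX : Measurable X)
    (hY : Measurable Y) (hXY : IndepFun X Y μ) (hsu : ∀ t, 0 ≤ t → μ.real {ω | X ω ≤ t} ≤ t)
    {r : β → ℕ} (hr : Measurable r) {B : Set β} [DecidablePred (· ∈ B)] (hB : MeasurableSet B)
    {s : ℝ} (hs : 0 ≤ s) :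
    ∫ ω, (if X ω ≤ r (Y ω) * s ∧ Y ω ∈ B then (1 : ℝ) else 0) / ((max (r (Y ω)) 1 : ℕ) : ℝ) ∂μ
      ≤ s * μ.real (Y ⁻¹' B) := by
  set F : ℝ × β → ℝ := fun z =>
    (if z.1 ≤ r z.2 * s ∧ z.2 ∈ B then (1 : ℝ) else 0) / ((max (r z.2) 1 : ℕ) : ℝ)
  have hP : MeasurableSet {z : ℝ × β | z.1 ≤ r z.2 * s ∧ z.2 ∈ B} :=
    (measurableSet_le measurable_fst (by fun_prop)).inter (hB.preimage measurable_snd)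
  have hFint : Integrable F ((μ.map X).prod (μ.map Y)) :=
    integrable_ite_div_max _ hP (hr.comp measurable_snd)
  have hinner : ∀ y, ∫ x, F (x, y) ∂μ.map X ≤ s * B.indicator 1 y := by
    intro y
    by_cases hy : y ∈ B
    · have hFy : (fun x => F (x, y)) =
          (Set.Iic (r y * s)).indicator fun _ => 1 / ((max (r y) 1 : ℕ) : ℝ) := by
        ext x; by_cases hx : x ≤ r y * s <;> simp [F, hx, hy]
      have hmax : (r y : ℝ) ≤ ((max (r y) 1 : ℕ) : ℝ) := by exact_mod_cast le_max_left _ _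
      have hmax1 : (0 : ℝ) < ((max (r y) 1 : ℕ) : ℝ) := by positivity
      rw [hFy, integral_indicator_const _ measurableSet_Iic,
        map_measureReal_apply hX measurableSet_Iic, Set.indicator_of_mem hy, Pi.one_apply,
        mul_one, smul_eq_mul, mul_one_div, div_le_iff₀ hmax1]
      calc μ.real (X ⁻¹' Set.Iic (r y * s)) ≤ r y * s := hsu _ (by positivity)
        _ ≤ s * ((max (r y) 1 : ℕ) : ℝ) := by nlinarith
    · simp [F, hy]
  rw [show (fun ω => (if X ω ≤ r (Y ω) * s ∧ Y ω ∈ B then (1 : ℝ) else 0) /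
      ((max (r (Y ω)) 1 : ℕ) : ℝ)) = fun ω => F (X ω, Y ω) from rfl,
    hXY.integral_comp_eq_integral_integral hX hY hFint]
  calc ∫ y, ∫ x, F (x, y) ∂μ.map X ∂μ.map Y ≤ ∫ y, s * B.indicator 1 y ∂μ.map Y :=
        integral_mono hFint.integral_prod_right ((integrable_indicator_iff hB).2
          (integrable_const 1).integrableOn |>.const_mul s) hinner
    _ = s * μ.real (Y ⁻¹' B) := by
        rw [integral_const_mul, integral_indicator_one hB, map_measureReal_apply hY hB]

lemma ProbabilityTheory.iIndepFun.indepFun_apply_prodMk {ι : Type*} [Fintype ι] [DecidableEq ι]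
    {U : ι → Ω → α} (hUm : ∀ i, Measurable (U i)) (hU : iIndepFun U μ) {Z : Ω → γ}
    (hZ : Measurable Z)
    (hUZ : IndepFun (fun ω i => U i ω) Z μ) (i : ι) :
    IndepFun (U i) (fun ω => ((fun j : ({i}ᶜ : Finset ι) => U j ω), Z ω)) μ := by
  have hsplit : IndepFun (fun ω (j : ({i} : Finset ι)) => U j ω)
      (fun ω (j : ({i}ᶜ : Finset ι)) => U j ω) μ :=
    hU.indepFun_finset {i} {i}ᶜ disjoint_compl_right hUm
  have hrest : IndepFun (fun ω => ((fun j : ({i} : Finset ι) => U j ω),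
      fun j : ({i}ᶜ : Finset ι) => U j ω)) Z μ :=
    hUZ.comp (φ := fun v =>
      ((fun j : ({i} : Finset ι) => v j), fun j : ({i}ᶜ : Finset ι) => v j)) (by fun_prop)
      measurable_id
  have hproj : Measurable fun v : ({i} : Finset ι) → α => v ⟨i, mem_singleton_self i⟩ :=
    measurable_pi_apply _
  exact (hsplit.indepFun_prodMk_of_indepFun_prodMk (by fun_prop) (by fun_prop) hZ hrest).comp
    hproj measurable_id

end Probability

lemma integral_natCast_card_filter {Ω ι : Type*} [MeasurableSpace Ω] {μ : Measure Ω}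
    [IsFiniteMeasure μ] [Fintype ι] {P : ι → Ω → Prop} [∀ ω, DecidablePred (P · ω)]
    (hP : ∀ i, MeasurableSet {ω | P i ω}) :
    ∫ ω, ((univ.filter fun i => P i ω).card : ℝ) ∂μ = ∑ i, μ.real {ω | P i ω} := by
  simp_rw [natCast_card_filter]
  rw [integral_finsetSum _ fun i _ => (integrable_const 1).indicator (hP i) |>.congr
    (ae_of_all _ fun ω => by simp [Set.indicator_apply])]
  refine sum_congr rfl fun i _ => ?_
  rw [← integral_indicator_one (hP i)]
  simp [Set.indicator_apply]

/-- `bhCrit m a k = α_{k+1:n}` for `n = m + 1`: `Fin` indices start at `0`. -/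
noncomputable def bhCrit (m : ℕ) (a : ℝ) : Fin (m + 1) → ℝ :=
  fun k => ((k.1 + 1 : ℝ) / (m + 1)) * a

lemma bhCrit_mono {m : ℕ} {a : ℝ} (ha : 0 ≤ a) : Monotone (bhCrit m a) := fun k l hkl => by
  have : (k.1 : ℝ) ≤ l.1 := by exact_mod_cast hkl
  unfold bhCrit; gcongr

lemma sdCount_bhCrit_update_zero {m : ℕ} {a : ℝ} (ha : 0 ≤ a) {p : Fin (m + 1) → ℝ}
    {i : Fin (m + 1)} (hpi : 0 < p i)
    (hrej : p i ≤ (sdCount (bhCrit m a) p : ℝ) / (m + 1) * a) :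
    sdCount (bhCrit m a) (Function.update p i 0) = sdCount (bhCrit m a) p := by
  set R := sdCount (bhCrit m a) p
  have hR : 0 < R := by
    by_contra! h
    rw [Nat.le_zero.1 h] at hrej
    simp only [Nat.cast_zero, zero_div, zero_mul] at hrej
    linarith
  let k : Fin (m + 1) := ⟨R - 1, by have := sdCount_le (bhCrit m a) p; omega⟩
  have hk : bhCrit m a k = (R : ℝ) / (m + 1) * a := by
    simp [bhCrit, k, Nat.cast_sub (Nat.one_le_iff_ne_zero.2 hR.ne')]
  exact sdCount_update_of_le (bhCrit_mono ha) hpi.le (k := k) (by simp [k]; omega) (hk ▸ hrej)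

lemma ite_div_max_sdCount_bhCrit_le_update {m : ℕ} {a : ℝ} (ha : 0 ≤ a)
    {p : Fin (m + 1) → ℝ} {i : Fin (m + 1)} {u : ℝ} (hu : 0 < u) {P : Prop} [Decidable P]
    (hpu : P → p i = u) :
    (if p i ≤ (sdCount (bhCrit m a) p : ℝ) / (m + 1) * a ∧ P then (1 : ℝ) else 0)
        / ((max (sdCount (bhCrit m a) p) 1 : ℕ) : ℝ) ≤
      (if u ≤ sdCount (bhCrit m a) (Function.update p i 0) * (a / (m + 1)) ∧ P
        then (1 : ℝ) else 0)
        / ((max (sdCount (bhCrit m a) (Function.update p i 0)) 1 : ℕ) : ℝ) := by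
  by_cases hrej : p i ≤ (sdCount (bhCrit m a) p : ℝ) / (m + 1) * a ∧ P
  · obtain ⟨hp, hP⟩ := hrej
    have hR := sdCount_bhCrit_update_zero ha (hpu hP ▸ hu) hp
    have hu' : u ≤ sdCount (bhCrit m a) (Function.update p i 0) * (a / (m + 1)) := by
      rw [hR, ← hpu hP]; convert hp using 1; ring
    rw [if_pos ⟨hp, hP⟩, if_pos ⟨hu', hP⟩, hR]
  · rw [if_neg hrej, zero_div]
    exact div_nonneg (by split_ifs <;> norm_num) (Nat.cast_nonneg _)

def biPValues {ι Ω : Type*} (H : ι → Ω → Bool) (U ξ : ι → Ω → ℝ) (ω : Ω) : ι → ℝ :=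
  fun j => if H j ω then ξ j ω else U j ω

lemma measurable_biPValues {ι Ω : Type*} [MeasurableSpace Ω] {H : ι → Ω → Bool}
    {U ξ : ι → Ω → ℝ} (hU : ∀ i, Measurable (U i)) (hξ : ∀ i, Measurable (ξ i))
    (hH : ∀ i, Measurable (H i)) : Measurable (biPValues H U ξ) :=
  measurable_pi_lambda _ fun j =>
    Measurable.ite ((hH j) (measurableSet_singleton true)) (hξ j) (hU j)

/-- The p-values with `p i` replaced by `0`, as a function of `(U_j)_{j ≠ i}`, `H` and `ξ`. -/
def restPValues {ι : Type*} [Fintype ι] [DecidableEq ι] (i : ι)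
    (y : (({i}ᶜ : Finset ι) → ℝ) × ((ι → Bool) × (ι → ℝ))) : ι → ℝ :=
  fun j => if hj : j ∈ ({i}ᶜ : Finset ι) then (if y.2.1 j then y.2.2 j else y.1 ⟨j, hj⟩) else 0

lemma measurable_restPValues {ι : Type*} [Fintype ι] [DecidableEq ι] (i : ι) :
    Measurable (restPValues i) := by
  refine measurable_pi_lambda _ fun j => ?_
  by_cases hj : j ∈ ({i}ᶜ : Finset ι)
  · simp only [restPValues, hj, dite_true]
    exact Measurable.ite (measurableSet_singleton true |>.preimage (by fun_prop)) (by fun_prop)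
      (by fun_prop)
  · simp only [restPValues, hj, dite_false, measurable_const]

lemma restPValues_eq_update {ι Ω : Type*} [Fintype ι] [DecidableEq ι] (H : ι → Ω → Bool)
    (U ξ : ι → Ω → ℝ) (i : ι) (ω : Ω) :
    restPValues i ((fun j : ({i}ᶜ : Finset ι) => U j ω), (fun j => H j ω, fun j => ξ j ω)) =
      Function.update (biPValues H U ξ ω) i 0 := by
  funext j
  by_cases hj : j = i
  · subst hj; simp [restPValues]
  · simp [restPValues, biPValues, hj]

lemma integral_bh_null_rejected_div_le {Ω : Type*} [MeasurableSpace Ω] {μ : Measure Ω}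
    [IsFiniteMeasure μ] {m : ℕ} {H : Fin (m + 1) → Ω → Bool} {U ξ : Fin (m + 1) → Ω → ℝ}
    (hUmeas : ∀ i, Measurable (U i)) (hξmeas : ∀ i, Measurable (ξ i))
    (hHmeas : ∀ i, Measurable (H i)) (hUindep : iIndepFun U μ)
    (hUHξ : IndepFun (fun ω => fun i => U i ω)
      (fun ω => ((fun i => H i ω), (fun i => ξ i ω))) μ) {i : Fin (m + 1)}
    (hunif : Measure.map (U i) μ = volume.restrict (Set.Ioo (0 : ℝ) 1)) {a : ℝ} (ha : 0 ≤ a) :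
    ∫ ω, (if biPValues H U ξ ω i ≤ (sdCount (bhCrit m a) (biPValues H U ξ ω) : ℝ) / (m + 1) * a
        ∧ H i ω = false then (1 : ℝ) else 0)
        / ((max (sdCount (bhCrit m a) (biPValues H U ξ ω)) 1 : ℕ) : ℝ) ∂μ
      ≤ a / (m + 1) * μ.real {ω | H i ω = false} := by
  set R := fun ω => sdCount (bhCrit m a) (biPValues H U ξ ω)
  set Y := fun ω => ((fun j : ({i}ᶜ : Finset (Fin (m + 1))) => U j ω), (fun j => H j ω,
    fun j => ξ j ω))
  set r := fun y => sdCount (bhCrit m a) (restPValues i y)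
  have hY : Measurable Y := by fun_prop
  have hr : Measurable r := (measurable_sdCount _).comp (measurable_restPValues i)
  have hB : MeasurableSet {y : (({i}ᶜ : Finset (Fin (m + 1))) → ℝ) ×
      ((Fin (m + 1) → Bool) × (Fin (m + 1) → ℝ)) | y.2.1 i = false} :=
    (measurableSet_singleton false).preimage (by fun_prop)
  have hP : MeasurableSet {ω | U i ω ≤ r (Y ω) * (a / (m + 1)) ∧ Y ω ∈ {y | y.2.1 i = false}} :=
    (measurableSet_le (hUmeas i) (by fun_prop)).inter (hB.preimage hY)
  have hsu : ∀ t, 0 ≤ t → μ.real {ω | U i ω ≤ t} ≤ t := fun t ht =>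
    measureReal_le_le_of_map_eq_uniform (hUmeas i) hunif ht
  have hle : ∀ ω, 0 < U i ω →
      (if biPValues H U ξ ω i ≤ (R ω : ℝ) / (m + 1) * a ∧ H i ω = false then (1 : ℝ) else 0)
        / ((max (R ω) 1 : ℕ) : ℝ) ≤
      (if U i ω ≤ r (Y ω) * (a / (m + 1)) ∧ Y ω ∈ {y | y.2.1 i = false} then (1 : ℝ) else 0)
        / ((max (r (Y ω)) 1 : ℕ) : ℝ) := fun ω hω => by
    simp only [r, Y, restPValues_eq_update]
    exact ite_div_max_sdCount_bhCrit_le_update ha hω fun hH => by simp [biPValues, hH]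
  calc _ ≤ ∫ ω, (if U i ω ≤ r (Y ω) * (a / (m + 1)) ∧ Y ω ∈ {y | y.2.1 i = false}
          then (1 : ℝ) else 0) / ((max (r (Y ω)) 1 : ℕ) : ℝ) ∂μ :=
        integral_mono_of_nonneg (ae_of_all _ fun ω => div_nonneg
          (by split_ifs <;> norm_num) (Nat.cast_nonneg _))
          (integrable_ite_div_max μ hP (hr.comp hY))
          ((ae_pos_of_measureReal_le_le hsu).mono hle)
    _ ≤ a / (m + 1) * μ.real {ω | H i ω = false} :=
        integral_ite_le_mul_div_max_le (hUmeas i) hY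
          (hUindep.indepFun_apply_prodMk hUmeas (by fun_prop) hUHξ i) hsu hr hB
          (by positivity : (0 : ℝ) ≤ a / (m + 1))

theorem bh_SD_fdr_bound_general {Ω : Type*} [MeasurableSpace Ω]
    (μ : Measure Ω) [IsProbabilityMeasure μ] {m : ℕ}
    (H : Fin (m + 1) → Ω → Bool) (U ξ : Fin (m + 1) → Ω → ℝ)
    (hUmeas : ∀ i, Measurable (U i)) (hξmeas : ∀ i, Measurable (ξ i))
    (hHmeas : ∀ i, Measurable (H i))
    (hUindep : iIndepFun U μ)
    (hUHξ : IndepFun (fun ω => fun i => U i ω)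
      (fun ω => ((fun i => H i ω), (fun i => ξ i ω))) μ)
    (hunif : ∀ i, Measure.map (U i) μ = volume.restrict (Set.Ioo (0 : ℝ) 1))
    (a : ℝ) (ha : 0 < a) :
    ∫ ω,
        (((Finset.univ.filter fun i : Fin (m + 1) =>
            (if H i ω then ξ i ω else U i ω) ≤
              (sdCount (fun k : Fin (m + 1) => ((k.1 + 1 : ℝ) / (m + 1)) * a)
                  (fun i => if H i ω then ξ i ω else U i ω) : ℝ) / (m + 1) * a
            ∧ H i ω = false).card : ℝ)
          / (max (sdCount (fun k : Fin (m + 1) => ((k.1 + 1 : ℝ) / (m + 1)) * a)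
              (fun i => if H i ω then ξ i ω else U i ω)) 1 : ℕ)) ∂μ
      ≤ (∫ ω, ((Finset.univ.filter fun i => H i ω = false).card : ℝ) ∂μ) / (m + 1) * a := by
  have hR : Measurable fun ω => sdCount (bhCrit m a) (biPValues H U ξ ω) :=
    (measurable_sdCount _).comp (measurable_biPValues hUmeas hξmeas hHmeas)
  have hnull : ∀ i, MeasurableSet {ω | H i ω = false} := fun i =>
    hHmeas i (measurableSet_singleton false)
  have hrej : ∀ i, MeasurableSet {ω | biPValues H U ξ ω i ≤
      (sdCount (bhCrit m a) (biPValues H U ξ ω) : ℝ) / (m + 1) * a ∧ H i ω = false} := fun i =>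
    (measurableSet_le ((measurable_pi_apply i).comp (measurable_biPValues hUmeas hξmeas hHmeas))
      ((measurable_from_nat.comp hR).div_const _ |>.mul_const a)).inter (hnull i)
  calc _ = ∑ i, ∫ ω, (if biPValues H U ξ ω i ≤
          (sdCount (bhCrit m a) (biPValues H U ξ ω) : ℝ) / (m + 1) * a ∧ H i ω = false
          then (1 : ℝ) else 0)
          / ((max (sdCount (bhCrit m a) (biPValues H U ξ ω)) 1 : ℕ) : ℝ) ∂μ := by
        rw [← integral_finsetSum _ fun i _ => integrable_ite_div_max μ (hrej i) hR]
        simp_rw [← sum_div, ← natCast_card_filter]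
        rfl
    _ ≤ ∑ i, a / (m + 1) * μ.real {ω | H i ω = false} := sum_le_sum fun i _ =>
        integral_bh_null_rejected_div_le hUmeas hξmeas hHmeas hUindep hUHξ (hunif i) ha.le
    _ = _ := by rw [← mul_sum, integral_natCast_card_filter hnull]; ring

/-- BH step-down FDR bound: under the BI model, the step-down test with critical values
`α_{i:n} = (i/n)·α` (any `α > 0`) satisfies `E[V_SD/max(R_SD,1)] ≤ (E[N₀]/n)·α`. -/
theorem bh_SD_fdr_bound {Ω : Type*} [MeasurableSpace Ω]
    (μ : Measure Ω) [IsProbabilityMeasure μ] {m : ℕ}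
    (H : Fin (m + 1) → Ω → Bool) (U ξ : Fin (m + 1) → Ω → ℝ)
    (hUmeas : ∀ i, Measurable (U i)) (hξmeas : ∀ i, Measurable (ξ i))
    (hHmeas : ∀ i, Measurable (H i))
    (hUindep : iIndepFun U μ)
    (hUHξ : IndepFun (fun ω => fun i => U i ω)
      (fun ω => ((fun i => H i ω), (fun i => ξ i ω))) μ)
    (hunif : ∀ i, Measure.map (U i) μ = volume.restrict (Set.Ioo (0 : ℝ) 1))
    (hξrange : ∀ i ω, ξ i ω ∈ Set.Icc (0 : ℝ) 1)
    (a : ℝ) (ha : 0 < a) :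
    ∫ ω,
        (((Finset.univ.filter fun i : Fin (m + 1) =>
            (if H i ω then ξ i ω else U i ω) ≤
              (sdCount (fun k : Fin (m + 1) => ((k.1 + 1 : ℝ) / (m + 1)) * a)
                  (fun i => if H i ω then ξ i ω else U i ω) : ℝ) / (m + 1) * a
            ∧ H i ω = false).card : ℝ)
          / (max (sdCount (fun k : Fin (m + 1) => ((k.1 + 1 : ℝ) / (m + 1)) * a)
              (fun i => if H i ω then ξ i ω else U i ω)) 1 : ℕ)) ∂μ
      ≤ (∫ ω, ((Finset.univ.filter fun i => H i ω = false).card : ℝ) ∂μ) / (m + 1) * a :=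
  bh_SD_fdr_bound_general μ H U ξ hUmeas hξmeas hHmeas hUindep hUHξ hunif a ha
end

section
/- Let p = (p_1,...,p_n) with p_1 ∈ [0,1] and p^{(1)} = (0, p_2,...,p_n). For the step-up test with nondecreasing deterministic critical values 0 < α_{1:n} ≤ ... ≤ α_{n:n} < 1 and R(p) = max{i : p_{i:n} ≤ α_{i:n}}, it holds that: (i) R(p) = R(p^{(1)}) on the event {p_1 ≤ α_{R(p):n}}, and (ii) {p_1 ≤ α_{R(p):n}} = {p_1 ≤ α_{R(p^{(1)}):n}}. -/
open MeasureTheory ProbabilityTheory Finset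
open scoped Classical

/-!
Replacing `p₁` by the smaller value `0` can only raise the counts `#{i : p_i ≤ t}`, and it
changes none of them at levels `t ≥ p₁`. Hence `R(p) ≤ R(p⁽¹⁾)`, and the step-up conditions
that decide `R(p⁽¹⁾)` are evaluated at critical values `≥ p₁` as soon as `p₁ ≤ α_{R:n}` for
`R = R(p)` (by monotonicity of the critical values) or for `R = R(p⁽¹⁾)`; there they read the
same for `p` and `p⁽¹⁾`, which forces `R(p) = R(p⁽¹⁾)`.
-/

open Function

namespace StepUp

variable {n : ℕ} {c p q : Fin n → ℝ}

theorem countLe_anti (hqp : q ≤ p) (t : ℝ) : countLe p t ≤ countLe q t :=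
  card_le_card fun i hi => by
    simp only [mem_filter, mem_univ, true_and] at hi ⊢
    exact (hqp i).trans hi

theorem countLe_update_of_le {i : Fin n} {a t : ℝ} (hpi : p i ≤ t) (ha : a ≤ t) :
    countLe (update p i a) t = countLe p t := by
  unfold countLe
  congr 1
  refine filter_congr fun j _ => ?_
  rcases eq_or_ne j i with rfl | hj
  · simp [hpi, ha]
  · rw [update_of_ne hj]

theorem threshold_zero : threshold c 0 = 0 := by
  simp [threshold]

theorem threshold_succ (k : Fin n) : threshold c (k.1 + 1) = c k := by
  simp [threshold, k.2]

theorem pos_of_threshold_pos {R : ℕ} (h : 0 < threshold c R) : 0 < R :=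
  Nat.pos_of_ne_zero fun hR => h.ne' (hR ▸ threshold_zero)

theorem le_suCount (k : Fin n) (hk : k.1 + 1 ≤ countLe p (c k)) : k.1 + 1 ≤ suCount c p :=
  le_sup (f := fun k : Fin n => k.1 + 1) (mem_filter.mpr ⟨mem_univ k, hk⟩)

theorem suCount_le_iff {r : ℕ} :
    suCount c p ≤ r ↔ ∀ k : Fin n, k.1 + 1 ≤ countLe p (c k) → k.1 + 1 ≤ r := by
  simp [suCount, Finset.sup_le_iff]

theorem exists_suCount_eq (h : 0 < suCount c p) :
    ∃ k : Fin n, suCount c p = k.1 + 1 ∧ k.1 + 1 ≤ countLe p (c k) := by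
  have hne : (univ.filter fun k : Fin n => k.1 + 1 ≤ countLe p (c k)).Nonempty := by
    rw [nonempty_iff_ne_empty]
    intro hempty
    rw [suCount, hempty, sup_empty] at h
    exact lt_irrefl 0 h
  obtain ⟨k, hk, hsup⟩ := exists_mem_eq_sup _ hne fun k : Fin n => k.1 + 1
  exact ⟨k, hsup, (mem_filter.mp hk).2⟩

theorem suCount_anti (hqp : q ≤ p) : suCount c p ≤ suCount c q :=
  suCount_le_iff.mpr fun k hk => le_suCount k (hk.trans (countLe_anti hqp _))

theorem suCount_le_of_countLe_le
    (h : ∀ k : Fin n, suCount c p ≤ k.1 → countLe q (c k) ≤ countLe p (c k)) :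
    suCount c q ≤ suCount c p := by
  refine suCount_le_iff.mpr fun k hk => ?_
  by_contra! hlt
  have := le_suCount k (hk.trans (h k (by omega)))
  omega

theorem suCount_update_of_le_threshold (hmono : Monotone c) {i : Fin n} {a : ℝ}
    (ha : a ≤ p i) (hR : 0 < suCount c p) (hpi : p i ≤ threshold c (suCount c p)) :
    suCount c (update p i a) = suCount c p := by
  obtain ⟨k, hk, -⟩ := exists_suCount_eq hR
  rw [hk, threshold_succ] at hpi
  refine le_antisymm (suCount_le_of_countLe_le fun j hj => ?_)
    (suCount_anti (update_le_self_iff.mpr ha))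
  have hkj : c k ≤ c j := hmono (Fin.le_def.mpr (by omega))
  exact (countLe_update_of_le (hpi.trans hkj) ((ha.trans hpi).trans hkj)).le

theorem suCount_update_of_le_threshold_update {i : Fin n} {a : ℝ} (ha : a ≤ p i)
    (hR : 0 < suCount c (update p i a)) (hpi : p i ≤ threshold c (suCount c (update p i a))) :
    suCount c (update p i a) = suCount c p := by
  obtain ⟨k, hk, hcount⟩ := exists_suCount_eq hR
  rw [hk, threshold_succ] at hpi
  rw [countLe_update_of_le hpi (ha.trans hpi)] at hcount
  exact le_antisymm (hk ▸ le_suCount k hcount) (suCount_anti (update_le_self_iff.mpr ha))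

end StepUp

open StepUp in
theorem stepUp_leave_one_out_general {m : ℕ} (c : Fin (m + 1) → ℝ) (hmono : Monotone c)
    (p : Fin (m + 1) → ℝ) (hp : p 0 ∈ Set.Icc (0 : ℝ) 1) :
    (p 0 ≤ threshold c (suCount c p) →
      suCount c p = suCount c (Function.update p 0 0)) ∧
    (p 0 ≤ threshold c (suCount c p) ↔
      p 0 ≤ threshold c (suCount c (Function.update p 0 0))) := by
  rcases hp.1.eq_or_lt with hzero | hpos
  · have hfixed : update p 0 0 = p := update_eq_self_iff.mpr hzero
    simp [hfixed]
  have stable : p 0 ≤ threshold c (suCount c p) →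
      suCount c p = suCount c (update p 0 0) := fun h =>
    (suCount_update_of_le_threshold hmono hpos.le (pos_of_threshold_pos (hpos.trans_le h)) h).symm
  refine ⟨stable, fun h => stable h ▸ h, fun h => ?_⟩
  have hR := pos_of_threshold_pos (hpos.trans_le h)
  rwa [suCount_update_of_le_threshold_update hpos.le hR h] at h

/-- Leave-one-out stability of the step-up count: with `p⁽¹⁾ = (0, p_2, …, p_n)`,
(i) `R(p) = R(p⁽¹⁾)` on `{p_1 ≤ α_{R(p):n}}` and (ii) `{p_1 ≤ α_{R(p):n}} = {p_1 ≤ α_{R(p⁽¹⁾):n}}`. -/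
theorem stepUp_leave_one_out {m : ℕ} (c : Fin (m + 1) → ℝ) (hmono : Monotone c)
    (hc0 : 0 < c 0) (hc1 : c (Fin.last m) < 1)
    (p : Fin (m + 1) → ℝ) (hp : p 0 ∈ Set.Icc (0 : ℝ) 1) :
    (p 0 ≤ threshold c (suCount c p) →
      suCount c p = suCount c (Function.update p 0 0)) ∧
    (p 0 ≤ threshold c (suCount c p) ↔
      p 0 ≤ threshold c (suCount c (Function.update p 0 0))) :=
  stepUp_leave_one_out_general c hmono p hp
end

section
/- Let U be uniform(0,1), independent of a positive random variable X and of a nonnegative integer-valued random variable R, where X and R are measurable functions of other data. Then for any λ ∈ (0,1], E[1{U ≤ λ}/X] = λ·E[1/X] whenever U is independent of X. More specifically, in the BI Model with N_0 = n_0 > 0 fixed and true p-values p_1,...,p_{n_0} exchangeable, E[V(λ)/n̂_0] = n_0·E[1{p_1 ≤ λ}/n̂_0] = λ·E[n_0/n̂_0^{(1)}], where n̂_0^{(1)} = n̂_0(p^{(1)}) is the estimator with p_1 set to 0. -/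
open MeasureTheory ProbabilityTheory Finset
open scoped Classical

open scoped ENNReal

/-! Write the p-values as `p = s.piecewise u x`, with `u` the true and `x` the false p-values.
The joint law of `(u, x)` is `uniformⁿ ⊗ law(x)`, so both identities can be computed under this
product measure. Swapping two true coordinates preserves the product measure and, since `n̂₀`
depends on `p` only through its empirical distribution function, also the estimator; hence every
true null contributes the same amount to `E[V(λ)/n̂₀]`. On `{p₁ ≤ λ}` setting `p₁` to `0` does not
change `F̂_n(t)` for `t ≥ λ`, so `n̂₀ = n̂₀⁽¹⁾` there; as `n̂₀⁽¹⁾` does not depend on `p₁`, Fubini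
over that coordinate factors out `P(p₁ ≤ λ) = λ`. Part (a) is the same factorization for a single
independent pair. -/

theorem countLe_comp_perm {n : ℕ} (q : Fin n → ℝ) (σ : Equiv.Perm (Fin n)) (t : ℝ) :
    countLe (q ∘ σ) t = countLe q t := by
  simp only [countLe, card_filter, Function.comp_apply]
  exact Equiv.sum_comp σ fun j => if q j ≤ t then 1 else 0

theorem countLe_update_of_iff {n : ℕ} (q : Fin n → ℝ) (i : Fin n) {a t : ℝ}
    (h : a ≤ t ↔ q i ≤ t) : countLe (Function.update q i a) t = countLe q t := by
  unfold countLe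
  congr 1
  refine filter_congr fun j _ => ?_
  rcases eq_or_ne j i with rfl | hj
  · simpa using h
  · simp [Function.update_of_ne hj]

theorem volume_restrict_Ioo_zero_one_Iic {lam : ℝ} (h : lam ≤ 1) :
    volume.restrict (Set.Ioo (0 : ℝ) 1) (Set.Iic lam) = ENNReal.ofReal lam := by
  rw [Measure.restrict_apply measurableSet_Iic]
  refine le_antisymm ?_ ?_
  · calc volume (Set.Iic lam ∩ Set.Ioo 0 1) ≤ volume (Set.Ioc 0 lam) :=
          measure_mono fun x ⟨hx, hx0, _⟩ => ⟨hx0, hx⟩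
      _ = ENNReal.ofReal lam := by simp
  · calc ENNReal.ofReal lam = volume (Set.Ioo 0 lam) := by simp
      _ ≤ volume (Set.Iic lam ∩ Set.Ioo 0 1) :=
          measure_mono fun x ⟨hx0, hx⟩ => ⟨hx.le, hx0, hx.trans_le h⟩

instance isProbabilityMeasure_volume_restrict_Ioo_zero_one :
    IsProbabilityMeasure (volume.restrict (Set.Ioo (0 : ℝ) 1)) :=
  ⟨by simp⟩

theorem integral_ite_le_div_of_indepFun {Ω : Type*} [MeasurableSpace Ω] {μ : Measure Ω}
    {U X : Ω → ℝ} (hU : Measurable U) (hX : Measurable X) (hUX : IndepFun U X μ)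
    (hlaw : μ.map U = volume.restrict (Set.Ioo (0 : ℝ) 1)) {lam : ℝ} (h0 : 0 ≤ lam)
    (h1 : lam ≤ 1) :
    ∫ ω, (if U ω ≤ lam then (1 : ℝ) else 0) / X ω ∂μ = lam * ∫ ω, 1 / X ω ∂μ := by
  have hφ : Measurable ((Set.Iic lam).indicator fun _ => (1 : ℝ)) :=
    measurable_const.indicator measurableSet_Iic
  have hψ : Measurable fun x : ℝ => 1 / x := measurable_const.div measurable_id
  have hmean : ∫ ω, (Set.Iic lam).indicator (fun _ => (1 : ℝ)) (U ω) ∂μ = lam := by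
    rw [← integral_map hU.aemeasurable hφ.aestronglyMeasurable, hlaw,
      integral_indicator_const _ measurableSet_Iic, measureReal_def,
      volume_restrict_Ioo_zero_one_Iic h1, ENNReal.toReal_ofReal h0, smul_eq_mul, mul_one]
  have hfactor := (hUX.comp hφ hψ).integral_fun_mul_eq_mul_integral
    (hφ.comp hU).aestronglyMeasurable (hψ.comp hX).aestronglyMeasurable
  simp only [Function.comp_apply, hmean] at hfactor
  simpa [Set.indicator_apply, div_eq_mul_one_div (if _ then _ else _)] using hfactor

section Pi

variable {ι α β : Type*} [Fintype ι] [MeasurableSpace α] [MeasurableSpace β]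

theorem map_pi_prod_eq_of_iIndepFun {Ω : Type*} [MeasurableSpace Ω] {μ : Measure Ω}
    [IsProbabilityMeasure μ] {U : ι → Ω → α} {ξ : Ω → β} (hU : ∀ i, Measurable (U i))
    (hξ : Measurable ξ) (hUind : iIndepFun U μ) (hUξ : IndepFun (fun ω i => U i ω) ξ μ)
    {ρ : Measure α} (hlaw : ∀ i, μ.map (U i) = ρ) :
    μ.map (fun ω => (fun i => U i ω, ξ ω)) = (Measure.pi fun _ : ι => ρ).prod (μ.map ξ) := by
  rw [(indepFun_iff_map_prod_eq_prod_map_map (measurable_pi_lambda _ hU).aemeasurable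
      hξ.aemeasurable).1 hUξ,
    (iIndepFun_iff_map_fun_eq_pi_map fun i => (hU i).aemeasurable).1 hUind]
  simp_rw [hlaw]

theorem measurePreserving_comp_perm (ρ : Measure α) [SigmaFinite ρ] (σ : Equiv.Perm ι) :
    MeasurePreserving (fun u : ι → α => u ∘ σ) (Measure.pi fun _ => ρ)
      (Measure.pi fun _ => ρ) := by
  convert measurePreserving_piCongrLeft (fun _ : ι => ρ) σ.symm using 1
  ext u j
  simp [MeasurableEquiv.coe_piCongrLeft, Equiv.piCongrLeft_apply]

theorem lintegral_prod_pi_comp_perm (ρ : Measure α) [SigmaFinite ρ] (κ : Measure β) [SFinite κ]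
    (σ : Equiv.Perm ι) {F : (ι → α) × β → ℝ≥0∞} (hF : Measurable F) :
    ∫⁻ z, F (z.1 ∘ σ, z.2) ∂(Measure.pi fun _ => ρ).prod κ
      = ∫⁻ z, F z ∂(Measure.pi fun _ => ρ).prod κ :=
  ((measurePreserving_comp_perm ρ σ).prod (MeasurePreserving.id κ)).lintegral_comp hF

variable [DecidableEq ι]

theorem lintegral_pi_mul_of_update_invariant (ρ : ι → Measure α) [∀ i, SigmaFinite (ρ i)]
    (i : ι) [IsProbabilityMeasure (ρ i)] {φ : α → ℝ≥0∞} (hφ : Measurable φ)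
    {G : (ι → α) → ℝ≥0∞} (hG : Measurable G) (hGi : ∀ u a, G (Function.update u i a) = G u) :
    ∫⁻ u, φ (u i) * G u ∂Measure.pi ρ = (∫⁻ a, φ a ∂ρ i) * ∫⁻ u, G u ∂Measure.pi ρ := by
  rcases isEmpty_or_nonempty (ι → α) with _ | ⟨⟨x⟩⟩
  · simp
  have hsplit : ∀ F : (ι → α) → ℝ≥0∞, Measurable F → ∫⁻ u, F u ∂Measure.pi ρ
      = (∫⋯∫⁻_univ.erase i, fun y => ∫⁻ a, F (Function.update y i a) ∂ρ i ∂ρ) x := by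
    intro F hF
    rw [lintegral_eq_lmarginal_univ x, lmarginal_erase' F hF (mem_univ i)]
  rw [hsplit _ (by fun_prop), hsplit G hG]
  simp_rw [Function.update_self, hGi, lintegral_mul_const _ hφ, lintegral_const, measure_univ,
    mul_one]
  exact lintegral_const_mul _ (hG.comp measurable_updateFinset)

theorem lintegral_prod_pi_mul_of_update_invariant (ρ : ι → Measure α) [∀ i, SigmaFinite (ρ i)]
    (i : ι) [IsProbabilityMeasure (ρ i)] (κ : Measure β) [SFinite κ] {φ : α → ℝ≥0∞}
    (hφ : Measurable φ) {G : (ι → α) × β → ℝ≥0∞} (hG : Measurable G)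
    (hGi : ∀ z a, G (Function.update z.1 i a, z.2) = G z) :
    ∫⁻ z, φ (z.1 i) * G z ∂(Measure.pi ρ).prod κ
      = (∫⁻ a, φ a ∂ρ i) * ∫⁻ z, G z ∂(Measure.pi ρ).prod κ := by
  rw [lintegral_prod _ (by fun_prop), lintegral_prod _ hG.aemeasurable]
  dsimp only
  have hconst : ∀ u, ∫⁻ y, φ (u i) * G (u, y) ∂κ = φ (u i) * ∫⁻ y, G (u, y) ∂κ :=
    fun u => lintegral_const_mul _ (hG.comp measurable_prodMk_left)
  simp_rw [hconst]
  exact lintegral_pi_mul_of_update_invariant ρ i hφ (hG.lintegral_prod_right' (ν := κ))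
    fun u a => lintegral_congr fun x => hGi (u, x) a

end Pi

section Piecewise

variable {ι α : Type*} {s : Set ι} [DecidablePred (· ∈ s)]

theorem Set.piecewise_comp_perm {σ : Equiv.Perm ι} (hσ : ∀ j ∉ s, σ j = j) (u x : ι → α) :
    s.piecewise (u ∘ σ) x = s.piecewise u x ∘ σ := by
  funext j
  by_cases hj : j ∈ s
  · have hσj : σ j ∈ s := by
      by_contra h
      exact h (by rwa [← σ.injective (hσ _ h)] at hj)
    simp [hj, hσj]
  · simp [hj, hσ j hj]

theorem Set.update_piecewise_update [DecidableEq ι] (u x : ι → α) (i : ι) (a c : α) :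
    Function.update (s.piecewise (Function.update u i a) x) i c
      = Function.update (s.piecewise u x) i c := by
  funext j
  rcases eq_or_ne j i with rfl | hj
  · simp
  · by_cases hjs : j ∈ s <;> simp [Function.update_of_ne hj, hjs]

@[fun_prop]
theorem Measurable.pi_piecewise {γ : Type*} [MeasurableSpace α] [MeasurableSpace γ]
    {u x : γ → ι → α} (hu : Measurable u) (hx : Measurable x) :
    Measurable fun z => s.piecewise (u z) (x z) := by
  refine measurable_pi_lambda _ fun i => ?_
  by_cases hi : i ∈ s
  · simpa [hi] using by fun_prop
  · simpa [hi] using by fun_prop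

end Piecewise

@[fun_prop]
theorem Measurable.card_filter_le {ι γ : Type*} [Fintype ι] [MeasurableSpace γ]
    {q : γ → ι → ℝ} (hq : Measurable q) (lam : ℝ) (t : ι → Prop) [DecidablePred t] :
    Measurable fun z => #{i | q z i ≤ lam ∧ t i} := by
  simp_rw [card_filter]
  refine Finset.measurable_sum _ fun i _ => Measurable.ite ?_ measurable_const measurable_const
  exact (measurableSet_le ((measurable_pi_apply i).comp hq) measurable_const).inter (.const _)

@[fun_prop]
theorem Measurable.ite_le_const {γ M : Type*} [MeasurableSpace γ] [MeasurableSpace M]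
    {g : γ → ℝ} (hg : Measurable g) (lam : ℝ) (a b : M) :
    Measurable fun z => if g z ≤ lam then a else b :=
  Measurable.ite (measurableSet_le hg measurable_const) measurable_const measurable_const

section ProductSpace

variable {ι : Type*} [Fintype ι] [DecidableEq ι] (ρ : Measure ℝ) (κ : Measure (ι → ℝ))
  [SFinite κ] (s : Set ι) [DecidablePred (· ∈ s)] (lam : ℝ) {f : (ι → ℝ) → ℝ≥0∞}

theorem lintegral_ite_le_mul_eq_of_mem [SigmaFinite ρ] (hf : Measurable f)
    (hfσ : ∀ (σ : Equiv.Perm ι) q, f (q ∘ σ) = f q) {i j : ι} (hi : i ∈ s) (hj : j ∈ s) :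
    ∫⁻ z, (if z.1 i ≤ lam then 1 else 0) * f (s.piecewise z.1 z.2)
        ∂(Measure.pi fun _ => ρ).prod κ
      = ∫⁻ z, (if z.1 j ≤ lam then 1 else 0) * f (s.piecewise z.1 z.2)
        ∂(Measure.pi fun _ => ρ).prod κ := by
  have hswap : ∀ k ∉ s, Equiv.swap j i k = k := fun k hk =>
    Equiv.swap_apply_of_ne_of_ne (ne_of_mem_of_not_mem hj hk).symm
      (ne_of_mem_of_not_mem hi hk).symm
  rw [← lintegral_prod_pi_comp_perm ρ κ (Equiv.swap j i) (by fun_prop)]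
  simp [Set.piecewise_comp_perm hswap, hfσ]

theorem lintegral_card_le_mul_eq [SigmaFinite ρ] (hf : Measurable f)
    (hfσ : ∀ (σ : Equiv.Perm ι) q, f (q ∘ σ) = f q) {i₀ : ι} (hi₀ : i₀ ∈ s) :
    ∫⁻ z, (#{i | s.piecewise z.1 z.2 i ≤ lam ∧ i ∈ s} : ℝ≥0∞) * f (s.piecewise z.1 z.2)
        ∂(Measure.pi fun _ => ρ).prod κ
      = #{i | i ∈ s} * ∫⁻ z, (if z.1 i₀ ≤ lam then 1 else 0) * f (s.piecewise z.1 z.2)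
        ∂(Measure.pi fun _ => ρ).prod κ := by
  have hsum : ∀ z : (ι → ℝ) × (ι → ℝ),
      (#{i | s.piecewise z.1 z.2 i ≤ lam ∧ i ∈ s} : ℝ≥0∞) * f (s.piecewise z.1 z.2)
        = ∑ i ∈ {i | i ∈ s}, (if z.1 i ≤ lam then 1 else 0) * f (s.piecewise z.1 z.2) := by
    intro z
    simp only [card_filter, Nat.cast_sum, sum_mul, sum_filter]
    refine sum_congr rfl fun i _ => ?_
    by_cases hi : i ∈ s <;> simp [hi]
  rw [lintegral_congr hsum, lintegral_finsetSum _ fun i _ => by fun_prop,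
    sum_congr rfl fun i hi => lintegral_ite_le_mul_eq_of_mem ρ κ s lam hf hfσ
      (mem_filter.1 hi).2 hi₀, sum_const, nsmul_eq_mul]

theorem lintegral_ite_le_mul_eq_update [IsProbabilityMeasure ρ] (hf : Measurable f) {i₀ : ι}
    (hi₀ : i₀ ∈ s) (c : ℝ) (hfu : ∀ q, q i₀ ≤ lam → f (Function.update q i₀ c) = f q) :
    ∫⁻ z, (if z.1 i₀ ≤ lam then 1 else 0) * f (s.piecewise z.1 z.2)
        ∂(Measure.pi fun _ => ρ).prod κ
      = ρ (Set.Iic lam) * ∫⁻ z, f (Function.update (s.piecewise z.1 z.2) i₀ c)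
        ∂(Measure.pi fun _ => ρ).prod κ := by
  calc _ = ∫⁻ z, (Set.Iic lam).indicator 1 (z.1 i₀)
        * f (Function.update (s.piecewise z.1 z.2) i₀ c) ∂(Measure.pi fun _ => ρ).prod κ := by
        refine lintegral_congr fun z => ?_
        by_cases h : z.1 i₀ ≤ lam
        · rw [hfu _ (by simpa [hi₀] using h)]
          simp [h]
        · simp [h]
    _ = _ := by
        rw [lintegral_prod_pi_mul_of_update_invariant (fun _ => ρ) i₀ κ
          (measurable_one.indicator measurableSet_Iic) (by fun_prop)
          fun z a => by simp only [Set.update_piecewise_update],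
          lintegral_indicator_one measurableSet_Iic]

end ProductSpace

theorem ENNReal.ofReal_natCast_div (n : ℕ) (x : ℝ) :
    ENNReal.ofReal (n / x) = n * ENNReal.ofReal x⁻¹ := by
  rw [div_eq_mul_inv, ENNReal.ofReal_mul n.cast_nonneg, ENNReal.ofReal_natCast]

theorem ENNReal.ofReal_ite_div (c : Prop) [Decidable c] (x : ℝ) :
    ENNReal.ofReal ((if c then 1 else 0) / x) = (if c then 1 else 0) * ENNReal.ofReal x⁻¹ := by
  split_ifs <;> simp

section BIModel

variable {Ω ι : Type*} [MeasurableSpace Ω] {μ : Measure Ω} [IsFiniteMeasure μ] [Fintype ι]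
  [DecidableEq ι] {U : ι → Ω → ℝ} {ξ : Ω → ι → ℝ} {ρ : Measure ℝ} (s : Set ι)
  [DecidablePred (· ∈ s)] (lam : ℝ) {e : (ι → ℝ) → ℝ}

theorem integral_card_le_div_eq [SigmaFinite ρ] (hU : ∀ i, Measurable (U i))
    (hξ : Measurable ξ)
    (hjoint : μ.map (fun ω => ((U · ω), ξ ω)) = (Measure.pi fun _ => ρ).prod (μ.map ξ))
    (he : Measurable e) (he0 : ∀ q, 0 ≤ e q) (heσ : ∀ (σ : Equiv.Perm ι) q, e (q ∘ σ) = e q)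
    {i₀ : ι} (hi₀ : i₀ ∈ s) :
    ∫ ω, (#{i | s.piecewise (U · ω) (ξ ω) i ≤ lam ∧ i ∈ s} : ℝ) / e (s.piecewise (U · ω) (ξ ω))
        ∂μ
      = #{i | i ∈ s} *
        ∫ ω, (if U i₀ ω ≤ lam then 1 else 0) / e (s.piecewise (U · ω) (ξ ω)) ∂μ := by
  have key := lintegral_card_le_mul_eq ρ (μ.map ξ) s lam
    (f := fun q => ENNReal.ofReal (e q)⁻¹) (by fun_prop) (fun σ q => by simp only [heσ]) hi₀
  rw [← hjoint, lintegral_map (by fun_prop) (by fun_prop),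
    lintegral_map (by fun_prop) (by fun_prop)] at key
  rw [integral_eq_lintegral_of_nonneg_ae (ae_of_all _ fun _ => div_nonneg (by positivity) (he0 _))
      (by fun_prop : Measurable _).aestronglyMeasurable,
    integral_eq_lintegral_of_nonneg_ae (ae_of_all _ fun _ => div_nonneg (by positivity) (he0 _))
      (by fun_prop : Measurable _).aestronglyMeasurable,
    ← ENNReal.toReal_natCast, ← ENNReal.toReal_mul]
  simp only [ENNReal.ofReal_natCast_div, ENNReal.ofReal_ite_div]
  exact congrArg ENNReal.toReal key

theorem integral_ite_le_div_eq_update [IsProbabilityMeasure ρ] (hU : ∀ i, Measurable (U i))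
    (hξ : Measurable ξ)
    (hjoint : μ.map (fun ω => ((U · ω), ξ ω)) = (Measure.pi fun _ => ρ).prod (μ.map ξ))
    (he : Measurable e) (he0 : ∀ q, 0 ≤ e q) {i₀ : ι} (hi₀ : i₀ ∈ s) (c : ℝ)
    (heu : ∀ q, q i₀ ≤ lam → e (Function.update q i₀ c) = e q) :
    ∫ ω, (if U i₀ ω ≤ lam then 1 else 0) / e (s.piecewise (U · ω) (ξ ω)) ∂μ
      = ρ.real (Set.Iic lam) *
        ∫ ω, 1 / e (Function.update (s.piecewise (U · ω) (ξ ω)) i₀ c) ∂μ := by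
  have key := lintegral_ite_le_mul_eq_update ρ (μ.map ξ) s lam
    (f := fun q => ENNReal.ofReal (e q)⁻¹) (by fun_prop) hi₀ c (fun q hq => by simp only [heu q hq])
  rw [← hjoint, lintegral_map (by fun_prop) (by fun_prop),
    lintegral_map (by fun_prop) (by fun_prop)] at key
  rw [integral_eq_lintegral_of_nonneg_ae (ae_of_all _ fun _ => div_nonneg (by positivity) (he0 _))
      (by fun_prop : Measurable _).aestronglyMeasurable,
    integral_eq_lintegral_of_nonneg_ae (ae_of_all _ fun _ => div_nonneg zero_le_one (he0 _))
      (by fun_prop : Measurable _).aestronglyMeasurable,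
    measureReal_def, ← ENNReal.toReal_mul]
  simp only [ENNReal.ofReal_ite_div, one_div]
  exact congrArg ENNReal.toReal key

end BIModel

theorem uniform_section_identity_general {Ω : Type*} [MeasurableSpace Ω]
    (μ : Measure Ω) [IsProbabilityMeasure μ]
    (lam : ℝ) (hlam : lam ∈ Set.Ioc (0 : ℝ) 1)
    -- part (a) data
    (Ugen X : Ω → ℝ) (hUgen : Measurable Ugen) (hXmeas : Measurable X)
    (hUX : IndepFun Ugen X μ)
    (hUgenUnif : Measure.map Ugen μ = volume.restrict (Set.Ioo (0 : ℝ) 1))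
    -- part (b) data: p-values `p i = if i < n₀ then U i else ξ i`
    {m : ℕ} (n₀ : ℕ) (hn₀ : 1 ≤ n₀) (hn₀le : n₀ ≤ m + 1)
    (U ξ : Fin (m + 1) → Ω → ℝ)
    (hUmeas : ∀ i, Measurable (U i)) (hξmeas : ∀ i, Measurable (ξ i))
    (hUindep : iIndepFun U μ)
    (hUξ : IndepFun (fun ω => fun i => U i ω) (fun ω => fun i => ξ i ω) μ)
    (hunif : ∀ i, Measure.map (U i) μ = volume.restrict (Set.Ioo (0 : ℝ) 1))
    (e : (Fin (m + 1) → ℝ) → ℝ) (hemeas : Measurable e) (hepos : ∀ q, 0 < e q)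
    (hecdf : ∀ q q' : Fin (m + 1) → ℝ,
      (∀ t, lam ≤ t → countLe q t = countLe q' t) → e q = e q') :
    (∫ ω, (if Ugen ω ≤ lam then (1 : ℝ) else 0) / X ω ∂μ
        = lam * ∫ ω, 1 / X ω ∂μ) ∧
    (∫ ω,
        (((Finset.univ.filter fun i : Fin (m + 1) =>
            (if i.1 < n₀ then U i ω else ξ i ω) ≤ lam ∧ i.1 < n₀).card : ℝ)
          / e (fun i => if i.1 < n₀ then U i ω else ξ i ω)) ∂μ
      = (n₀ : ℝ) *
        ∫ ω, (if U 0 ω ≤ lam then (1 : ℝ) else 0)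
            / e (fun i => if i.1 < n₀ then U i ω else ξ i ω) ∂μ) ∧
    (∫ ω,
        (((Finset.univ.filter fun i : Fin (m + 1) =>
            (if i.1 < n₀ then U i ω else ξ i ω) ≤ lam ∧ i.1 < n₀).card : ℝ)
          / e (fun i => if i.1 < n₀ then U i ω else ξ i ω)) ∂μ
      = lam *
        ∫ ω, (n₀ : ℝ)
            / e (Function.update (fun i => if i.1 < n₀ then U i ω else ξ i ω) 0 0) ∂μ) := by
  -- `s.piecewise` unfolds to the statement's `if i.1 < n₀ then U i ω else ξ i ω`, so the
  -- lemmas below apply up to definitional unfolding.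
  set s : Set (Fin (m + 1)) := {i | i.1 < n₀}
  have h0 : (0 : Fin (m + 1)) ∈ s := hn₀
  have hcard : #{i | i ∈ s} = n₀ := by simp [s, Fin.card_filter_val_lt, hn₀le]
  have hξ : Measurable fun ω i => ξ i ω := measurable_pi_lambda _ hξmeas
  have hjoint := map_pi_prod_eq_of_iIndepFun hUmeas hξ hUindep hUξ hunif
  have heσ : ∀ (σ : Equiv.Perm (Fin (m + 1))) q, e (q ∘ σ) = e q :=
    fun σ q => hecdf _ _ fun t _ => countLe_comp_perm q σ t
  have heu : ∀ q : Fin (m + 1) → ℝ, q 0 ≤ lam → e (Function.update q 0 0) = e q :=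
    fun q hq => hecdf _ _ fun t ht =>
      countLe_update_of_iff q 0 (iff_of_true (hlam.1.le.trans ht) (hq.trans ht))
  have hb1 := integral_card_le_div_eq s lam hUmeas hξ hjoint hemeas
    (fun q => (hepos q).le) heσ h0
  rw [hcard] at hb1
  refine ⟨integral_ite_le_div_of_indepFun hUgen hXmeas hUX hUgenUnif hlam.1.le hlam.2, hb1,
    hb1.trans ?_⟩
  rw [integral_ite_le_div_eq_update s lam hUmeas hξ hjoint hemeas
    (fun q => (hepos q).le) h0 0 heu, measureReal_def, volume_restrict_Ioo_zero_one_Iic hlam.2,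
    ENNReal.toReal_ofReal hlam.1.le, mul_left_comm, ← integral_const_mul]
  simp only [mul_one_div]
  rfl

/-- (a) For `Ugen` uniform(0,1) independent of a positive variable `X` and `λ ∈ (0,1]`,
`E[1{Ugen ≤ λ}/X] = λ·E[1/X]`.  (b) More specifically, in the BI model with `N₀ = n₀ > 0`
fixed (the true p-values being the first `n₀` coordinates, i.i.d. uniform(0,1) and
independent of the false p-values) and `n̂₀ = e(p)` a positive measurable function of
`(F̂_n(t))_{t ≥ λ}`:
`E[V(λ)/n̂₀] = n₀·E[1{p₁ ≤ λ}/n̂₀] = λ·E[n₀/n̂₀⁽¹⁾]`, where `n̂₀⁽¹⁾ = e(p⁽¹⁾)` has `p₁`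
replaced by `0`. -/
theorem uniform_section_identity {Ω : Type*} [MeasurableSpace Ω]
    (μ : Measure Ω) [IsProbabilityMeasure μ]
    (lam : ℝ) (hlam : lam ∈ Set.Ioc (0 : ℝ) 1)
    -- part (a) data
    (Ugen X : Ω → ℝ) (hUgen : Measurable Ugen) (hXmeas : Measurable X)
    (hXpos : ∀ ω, 0 < X ω) (hUX : IndepFun Ugen X μ)
    (hUgenUnif : Measure.map Ugen μ = volume.restrict (Set.Ioo (0 : ℝ) 1))
    -- part (b) data: p-values `p i = if i < n₀ then U i else ξ i`
    {m : ℕ} (n₀ : ℕ) (hn₀ : 1 ≤ n₀) (hn₀le : n₀ ≤ m + 1)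
    (U ξ : Fin (m + 1) → Ω → ℝ)
    (hUmeas : ∀ i, Measurable (U i)) (hξmeas : ∀ i, Measurable (ξ i))
    (hUindep : iIndepFun U μ)
    (hUξ : IndepFun (fun ω => fun i => U i ω) (fun ω => fun i => ξ i ω) μ)
    (hunif : ∀ i, Measure.map (U i) μ = volume.restrict (Set.Ioo (0 : ℝ) 1))
    (hξrange : ∀ i ω, ξ i ω ∈ Set.Icc (0 : ℝ) 1)
    (e : (Fin (m + 1) → ℝ) → ℝ) (hemeas : Measurable e) (hepos : ∀ q, 0 < e q)
    (hecdf : ∀ q q' : Fin (m + 1) → ℝ,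
      (∀ t, lam ≤ t → countLe q t = countLe q' t) → e q = e q') :
    (∫ ω, (if Ugen ω ≤ lam then (1 : ℝ) else 0) / X ω ∂μ
        = lam * ∫ ω, 1 / X ω ∂μ) ∧
    (∫ ω,
        (((Finset.univ.filter fun i : Fin (m + 1) =>
            (if i.1 < n₀ then U i ω else ξ i ω) ≤ lam ∧ i.1 < n₀).card : ℝ)
          / e (fun i => if i.1 < n₀ then U i ω else ξ i ω)) ∂μ
      = (n₀ : ℝ) *
        ∫ ω, (if U 0 ω ≤ lam then (1 : ℝ) else 0)
            / e (fun i => if i.1 < n₀ then U i ω else ξ i ω) ∂μ) ∧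
    (∫ ω,
        (((Finset.univ.filter fun i : Fin (m + 1) =>
            (if i.1 < n₀ then U i ω else ξ i ω) ≤ lam ∧ i.1 < n₀).card : ℝ)
          / e (fun i => if i.1 < n₀ then U i ω else ξ i ω)) ∂μ
      = lam *
        ∫ ω, (n₀ : ℝ)
            / e (Function.update (fun i => if i.1 < n₀ then U i ω else ξ i ω) 0 0) ∂μ) :=
  uniform_section_identity_general μ lam hlam Ugen X hUgen hXmeas hUX hUgenUnif n₀ hn₀ hn₀le U ξ
    hUmeas hξmeas hUindep hUξ hunif e hemeas hepos hecdf
end
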